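/- arXiv:1607.03348 — 6 statements merged into one kernel-verified Lean document; each statement's English description precedes it below -/
import Mathlib

section
/- Let H be a finite simple graph satisfying at least one of the following: (i) H has balanced components; (ii) V(H) has a partition into sets X and Y with no edges between X and Y, |X| ≤ |Y| ≤ |X| + 3, and the maximum degree of the induced subgraph H[Y] is strictly less than |Y| - 1; (iii) |V(H)| is odd and H has a vertex v with deg(v) ≤ (|V(H)| - 1)/2 such that H - v has balanced components; (iv) V(H) has a partition into nonempty sets X, Y₁, Y₂ and a single vertex v, such that there are no edges between any two of the sets X, Y₁, Y₂, all neighbours of v lie in X ∪ Y₁, |X| + 2 = |Y₁| + |Y₂|, and deg(v) ≤ (|V(H)| - 1)/2. Then the maximum degree of H is at most (|V(H)| - 1)/2. -/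
/-- `BalancedOn H S` : the induced subgraph of `H` on `S` has balanced components,
i.e. `S` can be partitioned into sets `X` and `Y` with no edges between them such that
`|X| = ⌊|S|/2⌋` and `|Y| = ⌈|S|/2⌉`. -/
def BalancedOn {V : Type*} (H : SimpleGraph V) (S : Set V) : Prop :=
  ∃ X Y : Set V, X ∪ Y = S ∧ Disjoint X Y ∧
    (∀ x ∈ X, ∀ y ∈ Y, ¬ H.Adj x y) ∧
    X.ncard = S.ncard / 2 ∧ Y.ncard = (S.ncard + 1) / 2

/-- If `v ∈ S` and all neighbours of `v` lie in `S`, then `deg v + 1 ≤ |S|`. -/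
lemma deg_bound {V : Type*} [Fintype V] (H : SimpleGraph V) (v : V) (S : Set V)
    (hv : v ∈ S) (hsub : {u | H.Adj v u} ⊆ S) :
    {u | H.Adj v u}.ncard + 1 ≤ S.ncard := by
  have hins : insert v {u | H.Adj v u} ⊆ S := Set.insert_subset hv hsub
  have h1 : (insert v {u | H.Adj v u}).ncard = {u | H.Adj v u}.ncard + 1 :=
    Set.ncard_insert_of_notMem (by simp) (Set.toFinite _)
  have := Set.ncard_le_ncard hins (Set.toFinite S)
  omega

lemma union_card {V : Type*} [Fintype V] (X Y : Set V) (hU : X ∪ Y = Set.univ)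
    (hD : Disjoint X Y) : X.ncard + Y.ncard = Fintype.card V := by
  have := Set.ncard_union_eq hD (Set.toFinite X) (Set.toFinite Y)
  rw [hU] at this
  rw [← this, Set.ncard_univ, Nat.card_eq_fintype_card]

/-- If a finite simple graph `H` has one of the structures (i)-(iv), then
`Δ(H) ≤ (|V(H)| - 1)/2` (expressed as `2·deg(v) + 1 ≤ |V(H)|` for every vertex `v`).
Degree conditions such as `deg < |Y| - 1` and `deg ≤ (|V(H)| - 1)/2` are expressed
subtraction-free as `deg + 1 < |Y|` and `2·deg + 1 ≤ |V(H)|` respectively. -/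
theorem statement6 {V : Type*} [Fintype V] (H : SimpleGraph V)
    (h :
      -- (i) H has balanced components
      BalancedOn H Set.univ ∨
      -- (ii)
      (∃ X Y : Set V, X ∪ Y = Set.univ ∧ Disjoint X Y ∧
        (∀ x ∈ X, ∀ y ∈ Y, ¬ H.Adj x y) ∧
        X.ncard ≤ Y.ncard ∧ Y.ncard ≤ X.ncard + 3 ∧
        ∀ y ∈ Y, {u | u ∈ Y ∧ H.Adj y u}.ncard + 1 < Y.ncard) ∨
      -- (iii)
      (Odd (Fintype.card V) ∧
        ∃ v : V, 2 * {u | H.Adj v u}.ncard + 1 ≤ Fintype.card V ∧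
          BalancedOn H ({v}ᶜ)) ∨
      -- (iv)
      (∃ (X Y₁ Y₂ : Set V) (v : V),
        X.Nonempty ∧ Y₁.Nonempty ∧ Y₂.Nonempty ∧
        insert v (X ∪ Y₁ ∪ Y₂) = Set.univ ∧
        Disjoint X Y₁ ∧ Disjoint X Y₂ ∧ Disjoint Y₁ Y₂ ∧ v ∉ X ∪ Y₁ ∪ Y₂ ∧
        (∀ x ∈ X, ∀ y ∈ Y₁, ¬ H.Adj x y) ∧
        (∀ x ∈ X, ∀ y ∈ Y₂, ¬ H.Adj x y) ∧
        (∀ y ∈ Y₁, ∀ y' ∈ Y₂, ¬ H.Adj y y') ∧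
        (∀ u, H.Adj v u → u ∈ X ∪ Y₁) ∧
        X.ncard + 2 = Y₁.ncard + Y₂.ncard ∧
        2 * {u | H.Adj v u}.ncard + 1 ≤ Fintype.card V)) :
    ∀ v : V, 2 * {u | H.Adj v u}.ncard + 1 ≤ Fintype.card V := by
  intro v
  rcases h with ⟨X, Y, hU, hD, hNE, hX, hY⟩ | ⟨X, Y, hU, hD, hNE, hXY, hYX, hdeg⟩ |
      ⟨hodd, w, hwdeg, X, Y, hU, hD, hNE, hX, hY⟩ |
      ⟨X, Y₁, Y₂, w, hXne, hY1ne, hY2ne, hU, hD1, hD2, hD3, hwnot, hXY1, hXY2, hY12,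
        hNbr, hcard, hwdeg⟩
  · -- case (i)
    have hn : X.ncard + Y.ncard = Fintype.card V := union_card X Y hU hD
    rw [Set.ncard_univ, Nat.card_eq_fintype_card] at hX hY
    have hv : v ∈ X ∪ Y := hU ▸ Set.mem_univ v
    rcases hv with hv | hv
    · have h1 := deg_bound H v X hv (fun u hu => by
        have : u ∈ X ∪ Y := hU ▸ Set.mem_univ u
        rcases this with h | h
        · exact h
        · exact absurd hu (hNE v hv u h))
      omega
    · have h1 := deg_bound H v Y hv (fun u hu => by
        have : u ∈ X ∪ Y := hU ▸ Set.mem_univ u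
        rcases this with h | h
        · exact absurd (H.adj_symm hu) (hNE u h v hv)
        · exact h)
      omega
  · -- case (ii)
    have hn : X.ncard + Y.ncard = Fintype.card V := union_card X Y hU hD
    have hv : v ∈ X ∪ Y := hU ▸ Set.mem_univ v
    rcases hv with hv | hv
    · have h1 := deg_bound H v X hv (fun u hu => by
        have : u ∈ X ∪ Y := hU ▸ Set.mem_univ u
        rcases this with h | h
        · exact h
        · exact absurd hu (hNE v hv u h))
      omega
    · have heq : {u | H.Adj v u} = {u | u ∈ Y ∧ H.Adj v u} := by
        apply Set.Subset.antisymm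
        · intro u hu
          have : u ∈ X ∪ Y := hU ▸ Set.mem_univ u
          rcases this with h | h
          · exact absurd (H.adj_symm hu) (hNE u h v hv)
          · exact ⟨h, hu⟩
        · intro u hu; exact hu.2
      have h1 := hdeg v hv
      rw [← heq] at h1
      omega
  · -- case (iii)
    have hSn : ({w}ᶜ : Set V).ncard + 1 = Fintype.card V := by
      have := Set.ncard_add_ncard_compl ({w} : Set V)
      rw [Set.ncard_singleton, Nat.card_eq_fintype_card] at this
      omega
    obtain ⟨k, hk⟩ := hodd
    by_cases hvw : v = w
    · subst hvw; exact hwdeg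
    have hv : v ∈ X ∪ Y := by rw [hU]; exact hvw
    have hwX : w ∉ X := fun hw => (hU ▸ Set.mem_union_left Y hw : w ∈ ({w}ᶜ : Set V)) rfl
    have hwY : w ∉ Y := fun hw => (hU ▸ Set.mem_union_right X hw : w ∈ ({w}ᶜ : Set V)) rfl
    have hnX : X.ncard + Y.ncard = ({w}ᶜ : Set V).ncard := by
      have := Set.ncard_union_eq hD (Set.toFinite X) (Set.toFinite Y)
      rw [hU] at this; omega
    rcases hv with hv | hv
    · have h1 := deg_bound H v (insert w X) (Set.mem_insert_of_mem w hv) (fun u hu => by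
        by_cases huw : u = w
        · exact huw ▸ Set.mem_insert w X
        · have : u ∈ X ∪ Y := by rw [hU]; exact huw
          rcases this with h | h
          · exact Set.mem_insert_of_mem w h
          · exact absurd hu (hNE v hv u h))
      rw [Set.ncard_insert_of_notMem hwX (Set.toFinite X)] at h1
      omega
    · have h1 := deg_bound H v (insert w Y) (Set.mem_insert_of_mem w hv) (fun u hu => by
        by_cases huw : u = w
        · exact huw ▸ Set.mem_insert w Y
        · have : u ∈ X ∪ Y := by rw [hU]; exact huw
          rcases this with h | h
          · exact absurd (H.adj_symm hu) (hNE u h v hv)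
          · exact Set.mem_insert_of_mem w h)
      rw [Set.ncard_insert_of_notMem hwY (Set.toFinite Y)] at h1
      omega
  · -- case (iv)
    have hY1pos : 0 < Y₁.ncard := (Set.ncard_pos (Set.toFinite _)).mpr hY1ne
    have hY2pos : 0 < Y₂.ncard := (Set.ncard_pos (Set.toFinite _)).mpr hY2ne
    have hD12 : Disjoint (X ∪ Y₁) Y₂ := Disjoint.union_left hD2 hD3
    have hn : 1 + (X.ncard + Y₁.ncard + Y₂.ncard) = Fintype.card V := by
      have h2 : (X ∪ Y₁).ncard = X.ncard + Y₁.ncard :=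
        Set.ncard_union_eq hD1 (Set.toFinite X) (Set.toFinite Y₁)
      have h3 : (X ∪ Y₁ ∪ Y₂).ncard = X.ncard + Y₁.ncard + Y₂.ncard := by
        rw [Set.ncard_union_eq hD12 (Set.toFinite _) (Set.toFinite Y₂), h2]
      have h4 : (insert w (X ∪ Y₁ ∪ Y₂)).ncard = (X ∪ Y₁ ∪ Y₂).ncard + 1 :=
        Set.ncard_insert_of_notMem hwnot (Set.toFinite _)
      rw [hU, Set.ncard_univ, Nat.card_eq_fintype_card] at h4
      omega
    by_cases hvw : v = w
    · subst hvw; exact hwdeg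
    have hv : v ∈ X ∪ Y₁ ∪ Y₂ := by
      have : v ∈ insert w (X ∪ Y₁ ∪ Y₂) := hU ▸ Set.mem_univ v
      rcases this with h | h
      · exact absurd h hvw
      · exact h
    have hwnX : w ∉ X := fun hw => hwnot (Set.mem_union_left _ (Set.mem_union_left _ hw))
    have hwnY1 : w ∉ Y₁ := fun hw => hwnot (Set.mem_union_left _ (Set.mem_union_right _ hw))
    have memcases : ∀ u : V, u = w ∨ u ∈ X ∨ u ∈ Y₁ ∨ u ∈ Y₂ := by
      intro u
      have : u ∈ insert w (X ∪ Y₁ ∪ Y₂) := hU ▸ Set.mem_univ u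
      rcases this with h | (h | h) | h
      · exact Or.inl h
      · exact Or.inr (Or.inl h)
      · exact Or.inr (Or.inr (Or.inl h))
      · exact Or.inr (Or.inr (Or.inr h))
    rcases hv with (hv | hv) | hv
    · -- v ∈ X
      have h1 := deg_bound H v (insert w X) (Set.mem_insert_of_mem w hv) (fun u hu => by
        rcases memcases u with h | h | h | h
        · exact h ▸ Set.mem_insert w X
        · exact Set.mem_insert_of_mem w h
        · exact absurd hu (hXY1 v hv u h)
        · exact absurd hu (hXY2 v hv u h))
      rw [Set.ncard_insert_of_notMem hwnX (Set.toFinite X)] at h1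
      omega
    · -- v ∈ Y₁
      have h1 := deg_bound H v (insert w Y₁) (Set.mem_insert_of_mem w hv) (fun u hu => by
        rcases memcases u with h | h | h | h
        · exact h ▸ Set.mem_insert w Y₁
        · exact absurd (H.adj_symm hu) (hXY1 u h v hv)
        · exact Set.mem_insert_of_mem w h
        · exact absurd hu (hY12 v hv u h))
      rw [Set.ncard_insert_of_notMem hwnY1 (Set.toFinite Y₁)] at h1
      omega
    · -- v ∈ Y₂
      have h1 := deg_bound H v Y₂ hv (fun u hu => by
        rcases memcases u with h | h | h | h
        · subst h
          have := hNbr v (H.adj_symm hu)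
          rcases this with h | h
          · exact absurd hv (Set.disjoint_left.mp hD2 h)
          · exact absurd hv (Set.disjoint_left.mp hD3 h)
        · exact absurd (H.adj_symm hu) (hXY2 u h v hv)
        · exact absurd (H.adj_symm hu) (hY12 u h v hv)
        · exact h)
      omega
end

section
/- Suppose the edges of the complete graph K_n are coloured with three colours (red, blue, green). Then the colouring is 4-partite if and only if each of the three colour classes is a disconnected spanning subgraph of K_n, and there exist a connected component C₁ of the red colour class and a connected component C₂ of the blue colour class such that all four sets C₁ ∩ C₂, C₂ \ C₁, C₁ \ C₂, and V(K_n) \ (C₁ ∪ C₂) are nonempty. -/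
/-- Given a `3`-edge-colouring `c` of the complete graph `K_n` (colours: `0` = red,
`1` = blue, `2` = green), the colour class of colour `i`: the spanning subgraph
consisting of all edges coloured `i`. -/
def colourClass {n : ℕ} (c : Sym2 (Fin n) → Fin 3) (i : Fin 3) : SimpleGraph (Fin n) where
  Adj u v := u ≠ v ∧ c s(u, v) = i
  symm := by
    constructor
    intro u v h
    refine ⟨h.1.symm, ?_⟩
    rw [Sym2.eq_swap]
    exact h.2
  loopless := by
    constructor
    intro v h
    exact h.1 rfl

/-- A `3`-edge-colouring of `K_n` is 4-partite: the vertex set is partitioned into four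
nonempty sets `A₁, A₂, A₃, A₄` where edges between `A₁,A₄` and between `A₂,A₃` are red,
edges between `A₂,A₄` and between `A₁,A₃` are blue, and edges between `A₃,A₄` and
between `A₁,A₂` are green. -/
def FourPartite {n : ℕ} (c : Sym2 (Fin n) → Fin 3) : Prop :=
  ∃ A₁ A₂ A₃ A₄ : Set (Fin n),
    A₁.Nonempty ∧ A₂.Nonempty ∧ A₃.Nonempty ∧ A₄.Nonempty ∧
    Disjoint A₁ A₂ ∧ Disjoint A₁ A₃ ∧ Disjoint A₁ A₄ ∧
    Disjoint A₂ A₃ ∧ Disjoint A₂ A₄ ∧ Disjoint A₃ A₄ ∧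
    A₁ ∪ A₂ ∪ A₃ ∪ A₄ = Set.univ ∧
    (∀ x ∈ A₁, ∀ y ∈ A₄, c s(x, y) = 0) ∧ (∀ x ∈ A₂, ∀ y ∈ A₃, c s(x, y) = 0) ∧
    (∀ x ∈ A₂, ∀ y ∈ A₄, c s(x, y) = 1) ∧ (∀ x ∈ A₁, ∀ y ∈ A₃, c s(x, y) = 1) ∧
    (∀ x ∈ A₃, ∀ y ∈ A₄, c s(x, y) = 2) ∧ (∀ x ∈ A₁, ∀ y ∈ A₂, c s(x, y) = 2)

private lemma fin3_eq_two (a : Fin 3) (h0 : a ≠ 0) (h1 : a ≠ 1) : a = 2 := by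
  fin_cases a <;> simp_all

private lemma fin3_eq_zero (a : Fin 3) (h1 : a ≠ 1) (h2 : a ≠ 2) : a = 0 := by
  fin_cases a <;> simp_all

private lemma fin3_eq_one (a : Fin 3) (h0 : a ≠ 0) (h2 : a ≠ 2) : a = 1 := by
  fin_cases a <;> simp_all

private lemma walk_mem {n : ℕ} {G : SimpleGraph (Fin n)} {S : Set (Fin n)}
    (hS : ∀ u ∈ S, ∀ y, G.Adj u y → y ∈ S) :
    ∀ {v u : Fin n}, G.Reachable v u → v ∈ S → u ∈ S := by
  intro v u h
  obtain ⟨w⟩ := h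
  induction w with
  | nil => exact id
  | cons h p ih => exact fun hv => ih (hS _ hv _ h)

/-- A `3`-colouring of `K_n` is 4-partite if and only if every colour class is
disconnected and there are a red component `C₁` and a blue component `C₂` such that
`C₁ ∩ C₂`, `C₂ \ C₁`, `C₁ \ C₂` and the complement of `C₁ ∪ C₂` are all nonempty. -/
theorem statement9 {n : ℕ} (c : Sym2 (Fin n) → Fin 3) :
    FourPartite c ↔
      ((∀ i : Fin 3, ¬ (colourClass c i).Connected) ∧
        ∃ C₁ C₂ : Set (Fin n),
          (∃ v, C₁ = {u | (colourClass c 0).Reachable v u}) ∧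
          (∃ w, C₂ = {u | (colourClass c 1).Reachable w u}) ∧
          (C₁ ∩ C₂).Nonempty ∧ (C₂ \ C₁).Nonempty ∧ (C₁ \ C₂).Nonempty ∧
          ((C₁ ∪ C₂)ᶜ).Nonempty) := by
  have csymm : ∀ x y : Fin n, c s(x, y) = c s(y, x) := fun x y => by
    rw [Sym2.eq_swap]
  constructor
  · rintro ⟨A₁, A₂, A₃, A₄, ⟨a1, ha1⟩, ⟨a2, ha2⟩, ⟨a3, ha3⟩, ⟨a4, ha4⟩,
      d12, d13, d14, d23, d24, d34, hU, r14, r23, b24, b13, g34, g12⟩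
    have cover : ∀ y : Fin n, y ∈ A₁ ∨ y ∈ A₂ ∨ y ∈ A₃ ∨ y ∈ A₄ := by
      intro y
      have : y ∈ A₁ ∪ A₂ ∪ A₃ ∪ A₄ := hU ▸ Set.mem_univ y
      simpa [Set.mem_union, or_assoc] using this
    have redClosed : ∀ u ∈ A₁ ∪ A₄, ∀ y, (colourClass c 0).Adj u y → y ∈ A₁ ∪ A₄ := by
      rintro u hu y ⟨-, hcol⟩
      rcases cover y with hy | hy | hy | hy
      · exact Or.inl hy
      · exfalso; rcases hu with hu | hu
        · rw [g12 u hu y hy] at hcol; exact absurd hcol (by decide)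
        · rw [csymm u y, b24 y hy u hu] at hcol; exact absurd hcol (by decide)
      · exfalso; rcases hu with hu | hu
        · rw [b13 u hu y hy] at hcol; exact absurd hcol (by decide)
        · rw [csymm u y, g34 y hy u hu] at hcol; exact absurd hcol (by decide)
      · exact Or.inr hy
    have blueClosed : ∀ u ∈ A₂ ∪ A₄, ∀ y, (colourClass c 1).Adj u y → y ∈ A₂ ∪ A₄ := by
      rintro u hu y ⟨-, hcol⟩
      rcases cover y with hy | hy | hy | hy
      · exfalso; rcases hu with hu | hu
        · rw [csymm u y, g12 y hy u hu] at hcol; exact absurd hcol (by decide)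
        · rw [csymm u y, r14 y hy u hu] at hcol; exact absurd hcol (by decide)
      · exact Or.inl hy
      · exfalso; rcases hu with hu | hu
        · rw [r23 u hu y hy] at hcol; exact absurd hcol (by decide)
        · rw [csymm u y, g34 y hy u hu] at hcol; exact absurd hcol (by decide)
      · exact Or.inr hy
    have greenClosed : ∀ u ∈ A₁ ∪ A₂, ∀ y, (colourClass c 2).Adj u y → y ∈ A₁ ∪ A₂ := by
      rintro u hu y ⟨-, hcol⟩
      rcases cover y with hy | hy | hy | hy
      · exact Or.inl hy
      · exact Or.inr hy
      · exfalso; rcases hu with hu | hu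
        · rw [b13 u hu y hy] at hcol; exact absurd hcol (by decide)
        · rw [r23 u hu y hy] at hcol; exact absurd hcol (by decide)
      · exfalso; rcases hu with hu | hu
        · rw [r14 u hu y hy] at hcol; exact absurd hcol (by decide)
        · rw [b24 u hu y hy] at hcol; exact absurd hcol (by decide)
    have hA14 : ∀ u, (colourClass c 0).Reachable a1 u → u ∈ A₁ ∪ A₄ :=
      fun u h => walk_mem redClosed h (Or.inl ha1)
    have hA24 : ∀ u, (colourClass c 1).Reachable a2 u → u ∈ A₂ ∪ A₄ :=
      fun u h => walk_mem blueClosed h (Or.inl ha2)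
    have a2notC1 : ¬ (colourClass c 0).Reachable a1 a2 := by
      intro h
      rcases hA14 a2 h with h' | h'
      · exact Set.disjoint_left.mp d12 h' ha2
      · exact Set.disjoint_left.mp d24 ha2 h'
    have a1notC2 : ¬ (colourClass c 1).Reachable a2 a1 := by
      intro h
      rcases hA24 a1 h with h' | h'
      · exact Set.disjoint_left.mp d12 ha1 h'
      · exact Set.disjoint_left.mp d14 ha1 h'
    have a3notC1 : ¬ (colourClass c 0).Reachable a1 a3 := by
      intro h
      rcases hA14 a3 h with h' | h'
      · exact Set.disjoint_left.mp d13 h' ha3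
      · exact Set.disjoint_left.mp d34 ha3 h'
    have a3notC2 : ¬ (colourClass c 1).Reachable a2 a3 := by
      intro h
      rcases hA24 a3 h with h' | h'
      · exact Set.disjoint_left.mp d23 h' ha3
      · exact Set.disjoint_left.mp d34 ha3 h'
    refine ⟨?_, {u | (colourClass c 0).Reachable a1 u}, {u | (colourClass c 1).Reachable a2 u},
      ⟨a1, rfl⟩, ⟨a2, rfl⟩, ⟨a4, ?_, ?_⟩, ⟨a2, ?_, a2notC1⟩, ⟨a1, ?_, a1notC2⟩,
      ⟨a3, ?_⟩⟩
    · intro i hc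
      fin_cases i
      · exact a2notC1 (hc.preconnected a1 a2)
      · exact a1notC2 (hc.preconnected a2 a1)
      · have h := walk_mem greenClosed (hc.preconnected a1 a3) (Or.inl ha1)
        rcases h with h' | h'
        · exact Set.disjoint_left.mp d13 h' ha3
        · exact Set.disjoint_left.mp d23 h' ha3
    · exact SimpleGraph.Adj.reachable
        ⟨fun e => Set.disjoint_left.mp d14 ha1 (e ▸ ha4), r14 a1 ha1 a4 ha4⟩
    · exact SimpleGraph.Adj.reachable
        ⟨fun e => Set.disjoint_left.mp d24 ha2 (e ▸ ha4), b24 a2 ha2 a4 ha4⟩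
    · exact SimpleGraph.Reachable.refl a2
    · exact SimpleGraph.Reachable.refl a1
    · rintro (h | h)
      · exact a3notC1 h
      · exact a3notC2 h
  · rintro ⟨hdis, C₁, C₂, ⟨v, rfl⟩, ⟨w, rfl⟩, ⟨a4, ha4⟩, ⟨a2, ha2⟩, ⟨a1, ha1⟩, ⟨a3, ha3⟩⟩
    set P1 : Fin n → Prop := fun u => (colourClass c 0).Reachable v u with hP1
    set P2 : Fin n → Prop := fun u => (colourClass c 1).Reachable w u with hP2
    have hne0 : ∀ u y, P1 u → ¬ P1 y → c s(u, y) ≠ 0 := by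
      intro u y hu hy h0
      exact hy (hu.trans (SimpleGraph.Adj.reachable ⟨fun e => hy (e ▸ hu), h0⟩))
    have hne1 : ∀ u y, P2 u → ¬ P2 y → c s(u, y) ≠ 1 := by
      intro u y hu hy h0
      exact hy (hu.trans (SimpleGraph.Adj.reachable ⟨fun e => hy (e ▸ hu), h0⟩))
    have hne0' : ∀ u y, ¬ P1 u → P1 y → c s(u, y) ≠ 0 := by
      intro u y hu hy
      rw [csymm u y]; exact hne0 y u hy hu
    have hne1' : ∀ u y, ¬ P2 u → P2 y → c s(u, y) ≠ 1 := by
      intro u y hu hy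
      rw [csymm u y]; exact hne1 y u hy hu
    -- a-points, with predicate forms
    have ha1' : P1 a1 ∧ ¬ P2 a1 := ⟨ha1.1, ha1.2⟩
    have ha2' : P2 a2 ∧ ¬ P1 a2 := ⟨ha2.1, ha2.2⟩
    have ha4' : P1 a4 ∧ P2 a4 := ⟨ha4.1, ha4.2⟩
    have ha3' : ¬ P1 a3 ∧ ¬ P2 a3 := ⟨fun h => ha3 (Or.inl h), fun h => ha3 (Or.inr h)⟩
    -- forced green edges
    have gAdj12 : ∀ p q, (P1 p ∧ ¬ P2 p) → (P2 q ∧ ¬ P1 q) → (colourClass c 2).Adj p q := by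
      intro p q hp hq
      exact ⟨fun e => hq.2 (e ▸ hp.1),
        fin3_eq_two _ (hne0 p q hp.1 hq.2) (hne1' p q hp.2 hq.1)⟩
    have gAdj34 : ∀ p q, (P1 p ∧ P2 p) → (¬ P1 q ∧ ¬ P2 q) → (colourClass c 2).Adj p q := by
      intro p q hp hq
      exact ⟨fun e => hq.1 (e ▸ hp.1),
        fin3_eq_two _ (hne0 p q hp.1 hq.1) (hne1 p q hp.2 hq.2)⟩
    -- the key lemma: no green edge between the symmetric difference side and the other side
    have greenConn : ∀ x y, (P1 x ∧ ¬ P2 x ∨ P2 x ∧ ¬ P1 x) →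
        (P1 y ∧ P2 y ∨ ¬ P1 y ∧ ¬ P2 y) → c s(x, y) ≠ 2 := by
      intro x y hx hy hg
      apply hdis 2
      have hxyne : x ≠ y := by
        rintro rfl
        rcases hx with hx | hx <;> rcases hy with hy | hy <;> tauto
      have hxy : (colourClass c 2).Adj x y := ⟨hxyne, hg⟩
      have reachS : ∀ u, (P1 u ∧ ¬ P2 u ∨ P2 u ∧ ¬ P1 u) →
          (colourClass c 2).Reachable x u := by
        intro u hu
        rcases hx with hx | hx <;> rcases hu with hu | hu
        · exact (gAdj12 x a2 hx ha2').reachable.trans (gAdj12 u a2 hu ha2').reachable.symm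
        · exact (gAdj12 x u hx hu).reachable
        · exact (gAdj12 u x hu hx).reachable.symm
        · exact (gAdj12 a1 x ha1' hx).reachable.symm.trans (gAdj12 a1 u ha1' hu).reachable
      have reachT : ∀ u, (P1 u ∧ P2 u ∨ ¬ P1 u ∧ ¬ P2 u) →
          (colourClass c 2).Reachable y u := by
        intro u hu
        rcases hy with hy | hy <;> rcases hu with hu | hu
        · exact (gAdj34 y a3 hy ha3').reachable.trans (gAdj34 u a3 hu ha3').reachable.symm
        · exact (gAdj34 y u hy hu).reachable
        · exact (gAdj34 u y hu hy).reachable.symm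
        · exact (gAdj34 a4 y ha4' hy).reachable.symm.trans (gAdj34 a4 u ha4' hu).reachable
      have total : ∀ u, (colourClass c 2).Reachable x u := by
        intro u
        by_cases h1 : P1 u <;> by_cases h2 : P2 u
        · exact hxy.reachable.trans (reachT u (Or.inl ⟨h1, h2⟩))
        · exact reachS u (Or.inl ⟨h1, h2⟩)
        · exact reachS u (Or.inr ⟨h2, h1⟩)
        · exact hxy.reachable.trans (reachT u (Or.inr ⟨h1, h2⟩))
      have : Nonempty (Fin n) := ⟨x⟩
      exact ⟨fun u u' => (total u).symm.trans (total u')⟩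
    refine ⟨{u | P1 u} \ {u | P2 u}, {u | P2 u} \ {u | P1 u},
      ({u | P1 u} ∪ {u | P2 u})ᶜ, {u | P1 u} ∩ {u | P2 u},
      ⟨a1, ha1'⟩, ⟨a2, ha2'⟩, ⟨a3, fun h => ha3 h⟩, ⟨a4, ha4'⟩,
      ?_, ?_, ?_, ?_, ?_, ?_, ?_, ?_, ?_, ?_, ?_, ?_, ?_⟩
    · rw [Set.disjoint_left]; rintro x ⟨h1, h2⟩ ⟨h3, h4⟩; exact h4 h1
    · rw [Set.disjoint_left]; rintro x ⟨h1, h2⟩ h3; exact h3 (Or.inl h1)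
    · rw [Set.disjoint_left]; rintro x ⟨h1, h2⟩ ⟨h3, h4⟩; exact h2 h4
    · rw [Set.disjoint_left]; rintro x ⟨h1, h2⟩ h3; exact h3 (Or.inr h1)
    · rw [Set.disjoint_left]; rintro x ⟨h1, h2⟩ ⟨h3, h4⟩; exact h2 h3
    · rw [Set.disjoint_left]; rintro x h1 ⟨h3, h4⟩; exact h1 (Or.inl h3)
    · ext x
      simp only [Set.mem_union, Set.mem_diff, Set.mem_compl_iff, Set.mem_inter_iff,
        Set.mem_setOf_eq, Set.mem_univ, iff_true]
      by_cases h1 : P1 x <;> by_cases h2 : P2 x <;> tauto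
    -- A₁–A₄ red
    · rintro x ⟨hx1, hx2⟩ y ⟨hy1, hy2⟩
      exact fin3_eq_zero _ (hne1' x y hx2 hy2) (greenConn x y (Or.inl ⟨hx1, hx2⟩) (Or.inl ⟨hy1, hy2⟩))
    -- A₂–A₃ red
    · rintro x ⟨hx1, hx2⟩ y hy
      have hy' : ¬ P1 y ∧ ¬ P2 y := ⟨fun h => hy (Or.inl h), fun h => hy (Or.inr h)⟩
      exact fin3_eq_zero _ (hne1 x y hx1 hy'.2) (greenConn x y (Or.inr ⟨hx1, hx2⟩) (Or.inr hy'))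
    -- A₂–A₄ blue
    · rintro x ⟨hx1, hx2⟩ y ⟨hy1, hy2⟩
      exact fin3_eq_one _ (hne0' x y hx2 hy1) (greenConn x y (Or.inr ⟨hx1, hx2⟩) (Or.inl ⟨hy1, hy2⟩))
    -- A₁–A₃ blue
    · rintro x ⟨hx1, hx2⟩ y hy
      have hy' : ¬ P1 y ∧ ¬ P2 y := ⟨fun h => hy (Or.inl h), fun h => hy (Or.inr h)⟩
      exact fin3_eq_one _ (hne0 x y hx1 hy'.1) (greenConn x y (Or.inl ⟨hx1, hx2⟩) (Or.inr hy'))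
    -- A₃–A₄ green
    · rintro x hx y ⟨hy1, hy2⟩
      have hx' : ¬ P1 x ∧ ¬ P2 x := ⟨fun h => hx (Or.inl h), fun h => hx (Or.inr h)⟩
      rw [csymm x y]
      exact fin3_eq_two _ (hne0 y x hy1 hx'.1) (hne1 y x hy2 hx'.2)
    -- A₁–A₂ green
    · rintro x ⟨hx1, hx2⟩ y ⟨hy1, hy2⟩
      exact fin3_eq_two _ (hne0 x y hx1 hy2) (hne1' x y hx2 hy1)
end

section
/- For all positive integers k and m, every finite simple graph G has a set S ⊆ V(G) with |S| ≤ (k-1)·m such that, letting C₁, …, C_t be the connected components of the induced subgraph of G on V(G)\S, at least one of the following holds: (a) t ≥ m; (b) for each i ∈ {1, …, t}, the induced subgraph on Cᵢ is either k-connected or complete. -/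
/-!
Induct on `m`. If some component `C` of `G - S` is neither `k`-connected nor complete, then
deleting some set of fewer than `k` vertices of `C` leaves two vertices of `C` in different
components (if `C` has fewer than `k` vertices, delete all but two non-adjacent ones). Since the
deleted vertices all lie in `C`, which keeps a vertex, this raises the number of components of
`G - S` by at least one, at the cost of at most `k - 1` further vertices of `S`.
-/

/-- A graph is `k`-connected if it remains connected after the removal of any fewer
than `k` vertices. -/
def KConnected {V : Type*} (k : ℕ) (G : SimpleGraph V) : Prop :=
  ∀ S : Set V, S.ncard < k → (G.induce (Sᶜ)).Connected

open Function Set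

namespace SimpleGraph

variable {V : Type*}

def ComponentsKConnectedOrComplete (k : ℕ) (G : SimpleGraph V) : Prop :=
  ∀ c : G.ConnectedComponent,
    KConnected k (G.induce c.supp) ∨ ∀ x y : c.supp, (x : V) ≠ y → G.Adj x y

noncomputable def induceInduceIso (G : SimpleGraph V) (s : Set V) (t : Set s) :
    (G.induce s).induce t ≃g G.induce (Subtype.val '' t) where
  toEquiv := Equiv.Set.image Subtype.val t Subtype.val_injective
  map_rel_iff' := Iff.rfl

lemma card_connectedComponent_induce_induce (G : SimpleGraph V) (s : Set V) (t : Set s) :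
    Nat.card ((G.induce s).induce t).ConnectedComponent =
      Nat.card (G.induce (Subtype.val '' t)).ConnectedComponent :=
  Nat.card_congr (induceInduceIso G s t).connectedComponentEquiv

lemma Reachable.induce_of_adj_mem {G : SimpleGraph V} {s t : Set V}
    (ht : ∀ ⦃u v⦄, u ∈ t → v ∈ s → G.Adj u v → v ∈ t) {u v : s}
    (huv : (G.induce s).Reachable u v) (hu : (u : V) ∈ t) (hv : (v : V) ∈ t) :
    (G.induce t).Reachable ⟨u, hu⟩ ⟨v, hv⟩ := by
  obtain ⟨p⟩ := huv
  induction p with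
  | nil => rfl
  | @cons x y z hxy p ih =>
    have hy : (y : V) ∈ t := ht hu y.2 hxy
    exact (Adj.reachable (show (G.induce t).Adj ⟨x, hu⟩ ⟨y, hy⟩ from hxy)).trans (ih hy hv)

lemma not_reachable_induce_pair {G : SimpleGraph V} {x y : V} (hxy : x ≠ y) (hna : ¬ G.Adj x y) :
    ¬ (G.induce {x, y}).Reachable ⟨x, by simp⟩ ⟨y, by simp⟩ := by
  intro h
  obtain ⟨z, hxz, -⟩ := (reachable_iff_reflTransGen _ _).mp h |>.cases_head.resolve_left
    (fun h => hxy congr($h.1))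
  obtain ⟨z, rfl | rfl⟩ := z
  · exact G.loopless.irrefl _ hxz
  · exact hna hxz

lemma exists_not_reachable_induce [Finite V] {G : SimpleGraph V} {k : ℕ}
    (hk : ¬ KConnected k G) (hG : G ≠ ⊤) :
    ∃ U : Set V, Uᶜ.ncard < k ∧ ∃ a b : U, ¬ (G.induce U).Reachable a b := by
  obtain ⟨T, hTk, hT⟩ : ∃ T : Set V, T.ncard < k ∧ ¬ (G.induce Tᶜ).Connected := by
    simpa [KConnected] using hk
  rcases not_and_or.mp ((connected_iff _).not.mp hT) with hpre | hempty
  · obtain ⟨a, b, hab⟩ : ∃ a b, ¬ (G.induce Tᶜ).Reachable a b := by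
      simpa [Preconnected] using hpre
    exact ⟨Tᶜ, by rwa [compl_compl], a, b, hab⟩
  · -- When nothing is left, `G` has fewer than `k` vertices and deleting all but two
    -- non-adjacent ones disconnects it.
    obtain ⟨x, y, hxy, hna⟩ := ne_top_iff_exists_not_adj.mp hG
    have hT : T = univ := by simpa [eq_univ_iff_forall] using hempty
    exact ⟨{x, y}, (ncard_le_ncard (subset_univ _)).trans_lt (hT ▸ hTk), _, _,
      not_reachable_induce_pair hxy hna⟩

lemma card_connectedComponent_lt_induce_compl [Finite V] {G : SimpleGraph V}
    {c : G.ConnectedComponent} {U : Set c.supp} {a b : U}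
    (hab : ¬ ((G.induce c.supp).induce U).Reachable a b) :
    Nat.card G.ConnectedComponent <
      Nat.card (G.induce (Subtype.val '' Uᶜ)ᶜ).ConnectedComponent := by
  set R := Subtype.val '' Uᶜ
  have hR : R ⊆ c.supp := by rintro _ ⟨x, -, rfl⟩; exact x.2
  have hUR : ∀ x : c.supp, x ∈ U → (x : V) ∉ R := by
    rintro x hx ⟨y, hy, hyx⟩
    exact hy (Subtype.ext hyx ▸ hx)
  let lift (x : U) : ↥Rᶜ := ⟨x.1.1, hUR _ x.2⟩
  let f := ConnectedComponent.map (Embedding.induce Rᶜ : G.induce Rᶜ ↪g G).toHom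
  have hf : ∀ x : U, f (connectedComponentMk _ (lift x)) = c := fun x => x.1.2
  have hsurj : Surjective f := by
    intro d
    by_cases hd : d = c
    · exact ⟨_, (hf a).trans hd.symm⟩
    · obtain ⟨w, rfl⟩ := d.exists_rep
      exact ⟨connectedComponentMk _ ⟨w, fun hw => hd (hR hw)⟩, rfl⟩
  have hninj : ¬ Injective f := by
    intro hinj
    have hclosed : ∀ ⦃u v⦄, u ∈ Subtype.val '' U → v ∈ Rᶜ → G.Adj u v →
        v ∈ Subtype.val '' U := by
      rintro _ v ⟨u, hu, rfl⟩ hvR huv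
      have hvc : v ∈ c.supp := c.mem_supp_of_adj_mem_supp u.2 huv
      exact ⟨⟨v, hvc⟩, by_contra fun hv => hvR ⟨⟨v, hvc⟩, hv, rfl⟩, rfl⟩
    have hr := (ConnectedComponent.exact (hinj ((hf a).trans (hf b).symm))).induce_of_adj_mem
      hclosed (mem_image_of_mem _ a.2) (mem_image_of_mem _ b.2)
    exact hab ((Iso.reachable_iff (φ := induceInduceIso G c.supp U)).mp hr)
  have := Fintype.ofFinite (G.induce Rᶜ).ConnectedComponent
  have := Fintype.ofFinite G.ConnectedComponent
  simpa only [Nat.card_eq_fintype_card] using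
    Fintype.card_lt_of_surjective_not_injective f hsurj hninj

lemma exists_ncard_lt_card_connectedComponent_lt [Finite V] {G : SimpleGraph V} {k : ℕ}
    {S : Set V} {c : (G.induce Sᶜ).ConnectedComponent}
    (hk : ¬ KConnected k ((G.induce Sᶜ).induce c.supp))
    (hc : ¬ (G.induce Sᶜ).IsClique c.supp) :
    ∃ T : Set V, T.ncard < k ∧ Nat.card (G.induce Sᶜ).ConnectedComponent <
      Nat.card (G.induce (S ∪ T)ᶜ).ConnectedComponent := by
  obtain ⟨U, hUk, a, b, hab⟩ := exists_not_reachable_induce hk (mt induce_eq_top.mp hc)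
  refine ⟨Subtype.val '' (Subtype.val '' Uᶜ), ?_, ?_⟩
  · rwa [ncard_image_of_injective _ Subtype.val_injective,
      ncard_image_of_injective _ Subtype.val_injective]
  · have hlt := card_connectedComponent_lt_induce_compl hab
    rwa [card_connectedComponent_induce_induce, image_val_compl, sdiff_eq, ← compl_union] at hlt

end SimpleGraph

theorem statement10_general {V : Type*} [Fintype V] (k m : ℕ) (G : SimpleGraph V) :
    ∃ S : Set V, S.ncard ≤ (k - 1) * m ∧
      (m ≤ Nat.card (G.induce (Sᶜ)).ConnectedComponent ∨
        ∀ comp : (G.induce (Sᶜ)).ConnectedComponent,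
          KConnected k ((G.induce (Sᶜ)).induce comp.supp) ∨
          ∀ x y : comp.supp, (x : ↥(Sᶜ)) ≠ y → (G.induce (Sᶜ)).Adj x y) := by
  induction m with
  | zero => exact ⟨∅, by simp, .inl (Nat.zero_le _)⟩
  | succ n ih =>
    obtain ⟨S, hS, hcases⟩ := ih
    by_cases hgood : (G.induce Sᶜ).ComponentsKConnectedOrComplete k
    · exact ⟨S, hS.trans (Nat.mul_le_mul_left _ n.le_succ), .inr hgood⟩
    have hn : n ≤ Nat.card (G.induce Sᶜ).ConnectedComponent := hcases.resolve_right hgood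
    obtain ⟨c, hk, hc⟩ : ∃ c : (G.induce Sᶜ).ConnectedComponent,
        ¬ KConnected k ((G.induce Sᶜ).induce c.supp) ∧ ¬ (G.induce Sᶜ).IsClique c.supp := by
      simpa [SimpleGraph.ComponentsKConnectedOrComplete, SimpleGraph.IsClique, Set.Pairwise]
        using hgood
    obtain ⟨T, hT, hlt⟩ := SimpleGraph.exists_ncard_lt_card_connectedComponent_lt hk hc
    refine ⟨S ∪ T, ?_, .inl (by omega)⟩
    calc (S ∪ T).ncard ≤ S.ncard + T.ncard := ncard_union_le S T
      _ ≤ (k - 1) * n + (k - 1) := by omega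
      _ = (k - 1) * (n + 1) := by ring

/-- For all positive integers `k` and `m`, every finite simple graph `G` has a set
`S ⊆ V(G)` with `|S| ≤ (k-1)·m` such that, for the connected components of the induced
subgraph on `V(G) \ S`, either (a) there are at least `m` of them, or (b) each of them
induces a subgraph which is `k`-connected or complete. -/
theorem statement10 {V : Type*} [Fintype V] (k m : ℕ) (hk : 1 ≤ k) (hm : 1 ≤ m)
    (G : SimpleGraph V) :
    ∃ S : Set V, S.ncard ≤ (k - 1) * m ∧
      (m ≤ Nat.card (G.induce (Sᶜ)).ConnectedComponent ∨
        ∀ comp : (G.induce (Sᶜ)).ConnectedComponent,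
          KConnected k ((G.induce (Sᶜ)).induce comp.supp) ∨
          ∀ x y : comp.supp, (x : ↥(Sᶜ)) ≠ y → (G.induce (Sᶜ)).Adj x y) :=
  statement10_general k m G
end

section
/- Suppose the edges of the complete bipartite graph K_{n,n}, with parts A and B, are coloured with two colours (red and blue). Then the vertex set of K_{n,n} can be partitioned into the vertex set of a red path P and four sets X₁, Y₁, X₂, Y₂ such that for each i ∈ {1,2}, Xᵢ ⊆ A, Yᵢ ⊆ B, |Xᵢ| = |Yᵢ|, and every edge between Xᵢ and Yᵢ is blue. -/
/-- Given a colouring `c` of the edges of the complete bipartite graph with parts `α`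
and `β` (edge between `a : α` and `b : β` gets colour `c a b`), the colour class of
colour `i`, as a simple graph on `α ⊕ β`. -/
def bipColour {α β : Type*} {k : ℕ} (c : α → β → Fin k) (i : Fin k) :
    SimpleGraph (α ⊕ β) where
  Adj x y :=
    match x, y with
    | Sum.inl a, Sum.inr b => c a b = i
    | Sum.inr b, Sum.inl a => c a b = i
    | _, _ => False
  symm := by
    constructor
    intro x y h
    cases x <;> cases y <;> first | exact h.elim | exact h
  loopless := by
    constructor
    intro x h
    cases x <;> exact h.elim

/-- A set of vertices `P` is the vertex set of a path of `G`; the empty set and a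
single vertex count as paths. -/
def IsPathSet {V : Type*} (G : SimpleGraph V) (P : Set V) : Prop :=
  P = ∅ ∨ ∃ (u v : V) (p : G.Walk u v), p.IsPath ∧ P = {x | x ∈ p.support}

open SimpleGraph Finset

def Concl {n : ℕ} (c : Fin n → Fin n → Fin 2) : Prop :=
  ∃ (P : Set (Fin n ⊕ Fin n)) (X₁ Y₁ X₂ Y₂ : Set (Fin n)),
      IsPathSet (bipColour c 0) P ∧
      X₁.ncard = Y₁.ncard ∧ X₂.ncard = Y₂.ncard ∧
      (∀ a ∈ X₁, ∀ b ∈ Y₁, c a b = 1) ∧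
      (∀ a ∈ X₂, ∀ b ∈ Y₂, c a b = 1) ∧
      Disjoint X₁ X₂ ∧ Disjoint Y₁ Y₂ ∧
      (∀ a ∈ X₁ ∪ X₂, Sum.inl a ∉ P) ∧
      (∀ b ∈ Y₁ ∪ Y₂, Sum.inr b ∉ P) ∧
      P ∪ Sum.inl '' (X₁ ∪ X₂) ∪ Sum.inr '' (Y₁ ∪ Y₂) = Set.univ

structure KInv {n : ℕ} (c : Fin n → Fin n → Fin 2) (m : ℕ)
    (X Y A₀ B₀ : Finset (Fin n)) (P : Set (Fin n ⊕ Fin n)) : Prop where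
  hm : (A₀.card - Y.card) + (B₀.card - X.card) ≤ m
  hXB : X.card ≤ B₀.card
  hYA : Y.card ≤ A₀.card
  hP : (P = ∅ ∧ X.card + A₀.card = Y.card + B₀.card) ∨
       ∃ (u : Fin n ⊕ Fin n) (v : Fin n ⊕ Fin n) (p : (bipColour c 0).Walk u v),
         p.IsPath ∧ P = {x | x ∈ p.support} ∧
         X.card + A₀.card + p.support.countP (·.isLeft)
           = Y.card + B₀.card + p.support.countP (·.isRight)
  hXA : Disjoint X A₀
  hYB : Disjoint Y B₀
  hXP : ∀ a ∈ X, Sum.inl a ∉ P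
  hAP : ∀ a ∈ A₀, Sum.inl a ∉ P
  hYP : ∀ b ∈ Y, Sum.inr b ∉ P
  hBP : ∀ b ∈ B₀, Sum.inr b ∉ P
  hcovA : ∀ a : Fin n, Sum.inl a ∈ P ∨ a ∈ X ∨ a ∈ A₀
  hcovB : ∀ b : Fin n, Sum.inr b ∈ P ∨ b ∈ Y ∨ b ∈ B₀
  blue1 : ∀ x ∈ X, ∀ b ∈ B₀, c x b = 1
  blue2 : ∀ a ∈ A₀, ∀ y ∈ Y, c a y = 1

/-- parity of walk supports in the bipartite graph -/
lemma walk_count {n : ℕ} {c : Fin n → Fin n → Fin 2} {u v : Fin n ⊕ Fin n}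
    (p : (bipColour c 0).Walk u v) :
    p.support.countP (·.isLeft) + (Sum.elim (fun _ => 0) (fun _ => 1) u : ℕ)
      + (Sum.elim (fun _ => 0) (fun _ => 1) v : ℕ)
      = p.support.countP (·.isRight) + 1 := by
  induction p with
  | nil =>
    rename_i w
    cases w <;> simp [Walk.support_nil, List.countP_cons, List.countP_nil]
  | @cons u u' v h q ih =>
    cases u with
    | inl a =>
      cases u' with
      | inl a' => exact h.elim
      | inr b' =>
        simp only [Walk.support_cons, List.countP_cons] at *
        simp at *
        omega
    | inr b =>
      cases u' with
      | inr b' => exact h.elim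
      | inl a' =>
        simp only [Walk.support_cons, List.countP_cons] at *
        simp at *
        omega

lemma terminal {n : ℕ} {c : Fin n → Fin n → Fin 2} {m : ℕ}
    {X Y A₀ B₀ : Finset (Fin n)} {P : Set (Fin n ⊕ Fin n)}
    (inv : KInv c m X Y A₀ B₀ P) (h1 : X.card = B₀.card) (h2 : Y.card = A₀.card) :
    Concl c := by
  refine ⟨P, ↑X, ↑B₀, ↑A₀, ↑Y, ?_, ?_, ?_, ?_, ?_, ?_, ?_, ?_, ?_, ?_⟩
  · rcases inv.hP with ⟨h, -⟩ | ⟨u, v, p, hp, hPe, -⟩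
    · exact Or.inl h
    · exact Or.inr ⟨u, v, p, hp, hPe⟩
  · simp [Set.ncard_coe_finset, h1]
  · simp [Set.ncard_coe_finset, h2]
  · exact fun a ha b hb => inv.blue1 a ha b hb
  · exact fun a ha b hb => inv.blue2 a ha b hb
  · exact_mod_cast inv.hXA
  · exact_mod_cast inv.hYB.symm
  · rintro a (ha | ha)
    · exact inv.hXP a ha
    · exact inv.hAP a ha
  · rintro b (hb | hb)
    · exact inv.hBP b hb
    · exact inv.hYP b hb
  · ext z
    simp only [Set.mem_union, Set.mem_univ, iff_true]
    cases z with
    | inl a =>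
      rcases inv.hcovA a with h | h | h
      · exact Or.inl (Or.inl h)
      · exact Or.inl (Or.inr ⟨a, Or.inl (by exact_mod_cast h), rfl⟩)
      · exact Or.inl (Or.inr ⟨a, Or.inr (by exact_mod_cast h), rfl⟩)
    | inr b =>
      rcases inv.hcovB b with h | h | h
      · exact Or.inl (Or.inl h)
      · exact Or.inr ⟨b, Or.inr (by exact_mod_cast h), rfl⟩
      · exact Or.inr ⟨b, Or.inl (by exact_mod_cast h), rfl⟩

lemma Astep {n : ℕ} {c : Fin n → Fin n → Fin 2} {m : ℕ}
    (ih : ∀ X Y A₀ B₀ P, KInv c m X Y A₀ B₀ P → Concl c)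
    {X Y A₀ B₀ : Finset (Fin n)} {P : Set (Fin n ⊕ Fin n)}
    {a : Fin n} {v : Fin n ⊕ Fin n} (p : (bipColour c 0).Walk (Sum.inl a) v)
    (hp : p.IsPath) (hPe : P = {x | x ∈ p.support})
    (hn : X.card + A₀.card + p.support.countP (·.isLeft)
        = Y.card + B₀.card + p.support.countP (·.isRight))
    (hlt : X.card < B₀.card)
    (inv : KInv c (m+1) X Y A₀ B₀ P) : Concl c := by
  have hm := inv.hm
  have hYA := inv.hYA
  by_cases hred : ∃ b ∈ B₀, c a b = 0
  · obtain ⟨b, hbB, hcb⟩ := hred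
    have hadj : (bipColour c 0).Adj (Sum.inr b) (Sum.inl a) := hcb
    have hbP : Sum.inr b ∉ p.support := fun h => inv.hBP b hbB (hPe ▸ h)
    have hB' : (B₀.erase b).card = B₀.card - 1 := Finset.card_erase_of_mem hbB
    refine ih X Y A₀ (B₀.erase b) {x | x ∈ (Walk.cons hadj p).support}
      ⟨by omega, by omega, by omega, ?_, inv.hXA,
       inv.hYB.mono_right (Finset.erase_subset _ _), ?_, ?_, ?_, ?_, ?_, ?_, ?_, ?_⟩
    · refine Or.inr ⟨_, _, Walk.cons hadj p, hp.cons hbP, rfl, ?_⟩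
      simp only [Walk.support_cons, List.countP_cons]
      simp only [Sum.isLeft_inr, Sum.isRight_inr]
      simp only [if_pos, if_neg]
      simp
      omega
    · intro x hx
      simp only [Set.mem_setOf_eq, Walk.support_cons, List.mem_cons]
      rintro (h | h)
      · exact Sum.inl_ne_inr h
      · exact inv.hXP x hx (hPe ▸ h)
    · intro x hx
      simp only [Set.mem_setOf_eq, Walk.support_cons, List.mem_cons]
      rintro (h | h)
      · exact Sum.inl_ne_inr h
      · exact inv.hAP x hx (hPe ▸ h)
    · intro y hy
      simp only [Set.mem_setOf_eq, Walk.support_cons, List.mem_cons]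
      rintro (h | h)
      · obtain rfl : y = b := by simpa using h
        exact (Finset.disjoint_left.mp inv.hYB hy) hbB
      · exact inv.hYP y hy (hPe ▸ h)
    · intro b' hb'
      obtain ⟨hne, hbB'⟩ := Finset.mem_erase.mp hb'
      simp only [Set.mem_setOf_eq, Walk.support_cons, List.mem_cons]
      rintro (h | h)
      · exact hne (by simpa using h)
      · exact inv.hBP b' hbB' (hPe ▸ h)
    · intro a'
      rcases inv.hcovA a' with h | h | h
      · left
        simp only [Set.mem_setOf_eq, Walk.support_cons, List.mem_cons]
        rw [hPe] at h; exact Or.inr h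
      · exact Or.inr (Or.inl h)
      · exact Or.inr (Or.inr h)
    · intro b'
      by_cases hbb : b' = b
      · subst hbb
        exact Or.inl (by simp [Walk.support_cons])
      · rcases inv.hcovB b' with h | h | h
        · left
          simp only [Set.mem_setOf_eq, Walk.support_cons, List.mem_cons]
          rw [hPe] at h; exact Or.inr h
        · exact Or.inr (Or.inl h)
        · exact Or.inr (Or.inr (Finset.mem_erase.mpr ⟨hbb, h⟩))
    · exact fun x hx b' hb' => inv.blue1 x hx b' (Finset.mem_of_mem_erase hb')
    · exact inv.blue2
  · push_neg at hred
    have h2 : ∀ x : Fin 2, x ≠ 0 → x = 1 := by decide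
    have hblue : ∀ b ∈ B₀, c a b = 1 := fun b hb => h2 _ (hred b hb)
    cases p with
    | nil =>
      have haX : a ∉ X := fun h => inv.hXP a h (by rw [hPe]; simp)
      have haA : a ∉ A₀ := fun h => inv.hAP a h (by rw [hPe]; simp)
      have hcard : (insert a X).card = X.card + 1 := Finset.card_insert_of_notMem haX
      have hn' : X.card + A₀.card + 1 = Y.card + B₀.card := by
        simp only [Walk.support_nil, List.countP_cons, List.countP_nil] at hn
        simp at hn
        omega
      refine ih (insert a X) Y A₀ B₀ ∅
        ⟨by omega, by omega, by omega, Or.inl ⟨rfl, by omega⟩,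
         Finset.disjoint_insert_left.mpr ⟨haA, inv.hXA⟩, inv.hYB,
         by simp, by simp, by simp, by simp, ?_, ?_, ?_, inv.blue2⟩
      · intro a'
        rcases inv.hcovA a' with h | h | h
        · rw [hPe] at h
          simp only [Set.mem_setOf_eq, Walk.support_nil, List.mem_singleton] at h
          obtain rfl : a' = a := by simpa using h
          exact Or.inr (Or.inl (Finset.mem_insert_self _ _))
        · exact Or.inr (Or.inl (Finset.mem_insert_of_mem h))
        · exact Or.inr (Or.inr h)
      · intro b'
        rcases inv.hcovB b' with h | h | h
        · rw [hPe] at h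
          simp at h
        · exact Or.inr (Or.inl h)
        · exact Or.inr (Or.inr h)
      · intro x hx b hb
        rcases Finset.mem_insert.mp hx with rfl | hx'
        · exact hblue b hb
        · exact inv.blue1 x hx' b hb
    | @cons _ u' _ h q =>
      cases u' with
      | inl a'' => exact h.elim
      | inr b' =>
        obtain ⟨hq, haq⟩ := (Walk.cons_isPath_iff h q).mp hp
        have haX : a ∉ X := fun hxx => inv.hXP a hxx (by rw [hPe]; simp)
        have haA : a ∉ A₀ := fun hxx => inv.hAP a hxx (by rw [hPe]; simp)
        have hcard : (insert a X).card = X.card + 1 := Finset.card_insert_of_notMem haX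
        have hn' : (insert a X).card + A₀.card + q.support.countP (·.isLeft)
            = Y.card + B₀.card + q.support.countP (·.isRight) := by
          simp only [Walk.support_cons, List.countP_cons] at hn
          simp at hn
          omega
        refine ih (insert a X) Y A₀ B₀ {x | x ∈ q.support}
          ⟨by omega, by omega, by omega, Or.inr ⟨_, _, q, hq, rfl, hn'⟩,
           Finset.disjoint_insert_left.mpr ⟨haA, inv.hXA⟩, inv.hYB,
           ?_, ?_, ?_, ?_, ?_, ?_, ?_, inv.blue2⟩
        · intro x hx hmem
          rcases Finset.mem_insert.mp hx with rfl | hx'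
          · exact haq hmem
          · exact inv.hXP x hx' (by rw [hPe]; simp only [Set.mem_setOf_eq,
              Walk.support_cons, List.mem_cons]; exact Or.inr hmem)
        · intro a' ha' hmem
          exact inv.hAP a' ha' (by rw [hPe]; simp only [Set.mem_setOf_eq,
            Walk.support_cons, List.mem_cons]; exact Or.inr hmem)
        · intro y hy hmem
          exact inv.hYP y hy (by rw [hPe]; simp only [Set.mem_setOf_eq,
            Walk.support_cons, List.mem_cons]; exact Or.inr hmem)
        · intro b'' hb'' hmem
          exact inv.hBP b'' hb'' (by rw [hPe]; simp only [Set.mem_setOf_eq,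
            Walk.support_cons, List.mem_cons]; exact Or.inr hmem)
        · intro a'
          rcases inv.hcovA a' with hh | hh | hh
          · rw [hPe] at hh
            simp only [Set.mem_setOf_eq, Walk.support_cons, List.mem_cons] at hh
            rcases hh with hh | hh
            · obtain rfl : a' = a := by simpa using hh
              exact Or.inr (Or.inl (Finset.mem_insert_self _ _))
            · exact Or.inl hh
          · exact Or.inr (Or.inl (Finset.mem_insert_of_mem hh))
          · exact Or.inr (Or.inr hh)
        · intro b''
          rcases inv.hcovB b'' with hh | hh | hh
          · rw [hPe] at hh
            simp only [Set.mem_setOf_eq, Walk.support_cons, List.mem_cons] at hh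
            rcases hh with hh | hh
            · exact absurd hh (by simp)
            · exact Or.inl hh
          · exact Or.inr (Or.inl hh)
          · exact Or.inr (Or.inr hh)
        · intro x hx b hb
          rcases Finset.mem_insert.mp hx with rfl | hx'
          · exact hblue b hb
          · exact inv.blue1 x hx' b hb

lemma Bstep {n : ℕ} {c : Fin n → Fin n → Fin 2} {m : ℕ}
    (ih : ∀ X Y A₀ B₀ P, KInv c m X Y A₀ B₀ P → Concl c)
    {X Y A₀ B₀ : Finset (Fin n)} {P : Set (Fin n ⊕ Fin n)}
    {b : Fin n} {v : Fin n ⊕ Fin n} (p : (bipColour c 0).Walk (Sum.inr b) v)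
    (hp : p.IsPath) (hPe : P = {x | x ∈ p.support})
    (hn : X.card + A₀.card + p.support.countP (·.isLeft)
        = Y.card + B₀.card + p.support.countP (·.isRight))
    (hlt : Y.card < A₀.card)
    (inv : KInv c (m+1) X Y A₀ B₀ P) : Concl c := by
  have hm := inv.hm
  have hXB := inv.hXB
  by_cases hred : ∃ a ∈ A₀, c a b = 0
  · obtain ⟨a, haA, hca⟩ := hred
    have hadj : (bipColour c 0).Adj (Sum.inl a) (Sum.inr b) := hca
    have haP : Sum.inl a ∉ p.support := fun h => inv.hAP a haA (hPe ▸ h)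
    have hA' : (A₀.erase a).card = A₀.card - 1 := Finset.card_erase_of_mem haA
    refine ih X Y (A₀.erase a) B₀ {x | x ∈ (Walk.cons hadj p).support}
      ⟨by omega, by omega, by omega, ?_,
       inv.hXA.mono_right (Finset.erase_subset _ _), inv.hYB, ?_, ?_, ?_, ?_, ?_, ?_, ?_, ?_⟩
    · refine Or.inr ⟨_, _, Walk.cons hadj p, hp.cons haP, rfl, ?_⟩
      simp only [Walk.support_cons, List.countP_cons]
      simp only [Sum.isLeft_inl, Sum.isRight_inl]
      simp
      omega
    · intro x hx
      simp only [Set.mem_setOf_eq, Walk.support_cons, List.mem_cons]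
      rintro (h | h)
      · obtain rfl : x = a := by simpa using h
        exact (Finset.disjoint_left.mp inv.hXA hx) haA
      · exact inv.hXP x hx (hPe ▸ h)
    · intro a' ha'
      obtain ⟨hne, haA'⟩ := Finset.mem_erase.mp ha'
      simp only [Set.mem_setOf_eq, Walk.support_cons, List.mem_cons]
      rintro (h | h)
      · exact hne (by simpa using h)
      · exact inv.hAP a' haA' (hPe ▸ h)
    · intro y hy
      simp only [Set.mem_setOf_eq, Walk.support_cons, List.mem_cons]
      rintro (h | h)
      · exact Sum.inr_ne_inl h
      · exact inv.hYP y hy (hPe ▸ h)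
    · intro b' hb'
      simp only [Set.mem_setOf_eq, Walk.support_cons, List.mem_cons]
      rintro (h | h)
      · exact Sum.inr_ne_inl h
      · exact inv.hBP b' hb' (hPe ▸ h)
    · intro a'
      by_cases haa : a' = a
      · subst haa
        exact Or.inl (by simp [Walk.support_cons])
      · rcases inv.hcovA a' with h | h | h
        · left
          simp only [Set.mem_setOf_eq, Walk.support_cons, List.mem_cons]
          rw [hPe] at h; exact Or.inr h
        · exact Or.inr (Or.inl h)
        · exact Or.inr (Or.inr (Finset.mem_erase.mpr ⟨haa, h⟩))
    · intro b'
      rcases inv.hcovB b' with h | h | h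
      · left
        simp only [Set.mem_setOf_eq, Walk.support_cons, List.mem_cons]
        rw [hPe] at h; exact Or.inr h
      · exact Or.inr (Or.inl h)
      · exact Or.inr (Or.inr h)
    · exact inv.blue1
    · exact fun a' ha' y hy => inv.blue2 a' (Finset.mem_of_mem_erase ha') y hy
  · push_neg at hred
    have h2 : ∀ x : Fin 2, x ≠ 0 → x = 1 := by decide
    have hblue : ∀ a ∈ A₀, c a b = 1 := fun a ha => h2 _ (hred a ha)
    cases p with
    | nil =>
      have hbY : b ∉ Y := fun h => inv.hYP b h (by rw [hPe]; simp)
      have hbB : b ∉ B₀ := fun h => inv.hBP b h (by rw [hPe]; simp)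
      have hcard : (insert b Y).card = Y.card + 1 := Finset.card_insert_of_notMem hbY
      have hn' : X.card + A₀.card = Y.card + B₀.card + 1 := by
        simp only [Walk.support_nil, List.countP_cons, List.countP_nil] at hn
        simp at hn
        omega
      refine ih X (insert b Y) A₀ B₀ ∅
        ⟨by omega, by omega, by omega, Or.inl ⟨rfl, by omega⟩,
         inv.hXA, Finset.disjoint_insert_left.mpr ⟨hbB, inv.hYB⟩,
         by simp, by simp, by simp, by simp, ?_, ?_, inv.blue1, ?_⟩
      · intro a'
        rcases inv.hcovA a' with h | h | h
        · rw [hPe] at h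
          simp at h
        · exact Or.inr (Or.inl h)
        · exact Or.inr (Or.inr h)
      · intro b'
        rcases inv.hcovB b' with h | h | h
        · rw [hPe] at h
          simp only [Set.mem_setOf_eq, Walk.support_nil, List.mem_singleton] at h
          obtain rfl : b' = b := by simpa using h
          exact Or.inr (Or.inl (Finset.mem_insert_self _ _))
        · exact Or.inr (Or.inl (Finset.mem_insert_of_mem h))
        · exact Or.inr (Or.inr h)
      · intro a ha y hy
        rcases Finset.mem_insert.mp hy with rfl | hy'
        · exact hblue a ha
        · exact inv.blue2 a ha y hy'
    | @cons _ u' _ h q =>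
      cases u' with
      | inr b'' => exact h.elim
      | inl a' =>
        obtain ⟨hq, hbq⟩ := (Walk.cons_isPath_iff h q).mp hp
        have hbY : b ∉ Y := fun hxx => inv.hYP b hxx (by rw [hPe]; simp)
        have hbB : b ∉ B₀ := fun hxx => inv.hBP b hxx (by rw [hPe]; simp)
        have hcard : (insert b Y).card = Y.card + 1 := Finset.card_insert_of_notMem hbY
        have hn' : X.card + A₀.card + q.support.countP (·.isLeft)
            = (insert b Y).card + B₀.card + q.support.countP (·.isRight) := by
          simp only [Walk.support_cons, List.countP_cons] at hn
          simp at hn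
          omega
        refine ih X (insert b Y) A₀ B₀ {x | x ∈ q.support}
          ⟨by omega, by omega, by omega, Or.inr ⟨_, _, q, hq, rfl, hn'⟩,
           inv.hXA, Finset.disjoint_insert_left.mpr ⟨hbB, inv.hYB⟩,
           ?_, ?_, ?_, ?_, ?_, ?_, inv.blue1, ?_⟩
        · intro x hx hmem
          exact inv.hXP x hx (by rw [hPe]; simp only [Set.mem_setOf_eq,
            Walk.support_cons, List.mem_cons]; exact Or.inr hmem)
        · intro a'' ha'' hmem
          exact inv.hAP a'' ha'' (by rw [hPe]; simp only [Set.mem_setOf_eq,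
            Walk.support_cons, List.mem_cons]; exact Or.inr hmem)
        · intro y hy hmem
          rcases Finset.mem_insert.mp hy with rfl | hy'
          · exact hbq hmem
          · exact inv.hYP y hy' (by rw [hPe]; simp only [Set.mem_setOf_eq,
              Walk.support_cons, List.mem_cons]; exact Or.inr hmem)
        · intro b'' hb'' hmem
          exact inv.hBP b'' hb'' (by rw [hPe]; simp only [Set.mem_setOf_eq,
            Walk.support_cons, List.mem_cons]; exact Or.inr hmem)
        · intro a''
          rcases inv.hcovA a'' with hh | hh | hh
          · rw [hPe] at hh
            simp only [Set.mem_setOf_eq, Walk.support_cons, List.mem_cons] at hh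
            rcases hh with hh | hh
            · exact absurd hh (by simp)
            · exact Or.inl hh
          · exact Or.inr (Or.inl hh)
          · exact Or.inr (Or.inr hh)
        · intro b''
          rcases inv.hcovB b'' with hh | hh | hh
          · rw [hPe] at hh
            simp only [Set.mem_setOf_eq, Walk.support_cons, List.mem_cons] at hh
            rcases hh with hh | hh
            · obtain rfl : b'' = b := by simpa using hh
              exact Or.inr (Or.inl (Finset.mem_insert_self _ _))
            · exact Or.inl hh
          · exact Or.inr (Or.inl (Finset.mem_insert_of_mem hh))
          · exact Or.inr (Or.inr hh)
        · intro a'' ha'' y hy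
          rcases Finset.mem_insert.mp hy with rfl | hy'
          · exact hblue a'' ha''
          · exact inv.blue2 a'' ha'' y hy'

lemma key {n : ℕ} (c : Fin n → Fin n → Fin 2) :
    ∀ m (X Y A₀ B₀ : Finset (Fin n)) (P : Set (Fin n ⊕ Fin n)),
      KInv c m X Y A₀ B₀ P → Concl c := by
  intro m
  induction m with
  | zero =>
    intro X Y A₀ B₀ P inv
    have h1 := inv.hm
    have h2 := inv.hXB
    have h3 := inv.hYA
    exact terminal inv (by omega) (by omega)
  | succ m ih =>
    intro X Y A₀ B₀ P inv
    by_cases hterm : X.card = B₀.card ∧ Y.card = A₀.card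
    · exact terminal inv hterm.1 hterm.2
    · have hXB := inv.hXB
      have hYA := inv.hYA
      have hm := inv.hm
      have hterm' : X.card ≠ B₀.card ∨ Y.card ≠ A₀.card := by tauto
      rcases inv.hP with ⟨hPe, hn⟩ | ⟨u, v, p, hp, hPe, hn⟩
      · -- empty path
        have hAcard : 0 < A₀.card := by omega
        obtain ⟨a, ha⟩ := Finset.card_pos.mp hAcard
        have haX : a ∉ X := Finset.disjoint_right.mp inv.hXA ha
        have hA' : (A₀.erase a).card = A₀.card - 1 := Finset.card_erase_of_mem ha
        refine ih X Y (A₀.erase a) B₀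
          {x | x ∈ (Walk.nil : (bipColour c 0).Walk (Sum.inl a) (Sum.inl a)).support}
          ⟨by omega, by omega, by omega, ?_,
           inv.hXA.mono_right (Finset.erase_subset _ _), inv.hYB,
           ?_, ?_, ?_, ?_, ?_, ?_, ?_, ?_⟩
        · refine Or.inr ⟨_, _, Walk.nil, Walk.IsPath.nil, rfl, ?_⟩
          simp only [Walk.support_nil, List.countP_cons, List.countP_nil]
          simp
          omega
        · intro x hx hmem
          simp only [Set.mem_setOf_eq, Walk.support_nil, List.mem_singleton] at hmem
          obtain rfl : x = a := by simpa using hmem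
          exact haX hx
        · intro a' ha' hmem
          simp only [Set.mem_setOf_eq, Walk.support_nil, List.mem_singleton] at hmem
          obtain rfl : a' = a := by simpa using hmem
          exact (Finset.mem_erase.mp ha').1 rfl
        · intro y _ hmem
          simp at hmem
        · intro b' _ hmem
          simp at hmem
        · intro a'
          by_cases haa : a' = a
          · subst haa
            exact Or.inl (by simp)
          · rcases inv.hcovA a' with h | h | h
            · rw [hPe] at h
              exact absurd h (Set.notMem_empty _)
            · exact Or.inr (Or.inl h)
            · exact Or.inr (Or.inr (Finset.mem_erase.mpr ⟨haa, h⟩))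
        · intro b'
          rcases inv.hcovB b' with h | h | h
          · rw [hPe] at h
            exact absurd h (Set.notMem_empty _)
          · exact Or.inr (Or.inl h)
          · exact Or.inr (Or.inr h)
        · exact inv.blue1
        · exact fun a' ha' y hy => inv.blue2 a' (Finset.mem_of_mem_erase ha') y hy
      · have hw := walk_count p
        rcases u with a | b
        · rcases v with a' | b'
          · simp only [Sum.elim_inl] at hw
            exact Astep ih p hp hPe hn (by omega) inv
          · simp only [Sum.elim_inl, Sum.elim_inr] at hw
            exact Astep ih p hp hPe hn (by omega) inv
        · have hc1 : p.reverse.support.countP (·.isLeft) = p.support.countP (·.isLeft) := by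
            simp [Walk.support_reverse, List.countP_eq_length_filter]
          have hc2 : p.reverse.support.countP (·.isRight) = p.support.countP (·.isRight) := by
            simp [Walk.support_reverse, List.countP_eq_length_filter]
          have hPe' : P = {x | x ∈ p.reverse.support} := by
            rw [hPe]
            ext z
            simp [Walk.support_reverse]
          rcases v with a' | b'
          · simp only [Sum.elim_inl, Sum.elim_inr] at hw
            exact Astep ih p.reverse hp.reverse hPe' (by rw [hc1, hc2]; exact hn)
              (by omega) inv
          · simp only [Sum.elim_inr] at hw
            exact Bstep ih p hp hPe hn (by omega) inv

/-- For every `2`-edge-colouring (`0` = red, `1` = blue) of `K_{n,n}`, with parts `A`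
(the left copy of `Fin n`) and `B` (the right copy), the vertex set can be partitioned
into the vertex set of a red path `P` and four sets `X₁, Y₁, X₂, Y₂` with `Xᵢ ⊆ A`,
`Yᵢ ⊆ B`, `|Xᵢ| = |Yᵢ|`, and all edges between `Xᵢ` and `Yᵢ` blue. -/
theorem statement13 {n : ℕ} (c : Fin n → Fin n → Fin 2) :
    ∃ (P : Set (Fin n ⊕ Fin n)) (X₁ Y₁ X₂ Y₂ : Set (Fin n)),
      IsPathSet (bipColour c 0) P ∧
      X₁.ncard = Y₁.ncard ∧ X₂.ncard = Y₂.ncard ∧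
      (∀ a ∈ X₁, ∀ b ∈ Y₁, c a b = 1) ∧
      (∀ a ∈ X₂, ∀ b ∈ Y₂, c a b = 1) ∧
      Disjoint X₁ X₂ ∧ Disjoint Y₁ Y₂ ∧
      (∀ a ∈ X₁ ∪ X₂, Sum.inl a ∉ P) ∧
      (∀ b ∈ Y₁ ∪ Y₂, Sum.inr b ∉ P) ∧
      P ∪ Sum.inl '' (X₁ ∪ X₂) ∪ Sum.inr '' (Y₁ ∪ Y₂) = Set.univ := by
  have h := key c (2 * n) ∅ ∅ Finset.univ Finset.univ ∅
    ⟨by simp; omega, by simp, by simp, Or.inl ⟨rfl, by simp⟩,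
     by simp, by simp,
     by simp, by simp, by simp, by simp,
     fun a => Or.inr (Or.inr (Finset.mem_univ a)),
     fun b => Or.inr (Or.inr (Finset.mem_univ b)),
     by simp, by simp⟩
  exact h
end

section
/- Let t ≥ 0 and suppose the edges of the complete bipartite graph K_{n,n+t} are coloured with three colours (red, blue, green). Then the vertex set of K_{n,n+t} can be partitioned into the vertex sets of one red path, two blue paths, four green paths, and a set of t single vertices. -/
set_option linter.unusedSectionVars false
set_option maxHeartbeats 1600000

open Finset

namespace Stmt16

variable {V : Type*} [DecidableEq V]

/-- Finset version of path-set. -/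
def FinPathSet (R : SimpleGraph V) (S : Finset V) : Prop :=
  S = ∅ ∨ ∃ (u v : V) (p : R.Walk u v), p.IsPath ∧ p.support.toFinset = S

/-- A configuration for the key lemma. -/
structure Conf (R : SimpleGraph V) (side : V → Bool) (X Y PX PY A1 A2 B1 B2 : Finset V) :
    Prop where
  uX : PX ∪ A1 ∪ A2 = X
  uY : PY ∪ B1 ∪ B2 = Y
  dXa : Disjoint PX A1
  dXb : Disjoint PX A2
  dXc : Disjoint A1 A2
  dYa : Disjoint PY B1
  dYb : Disjoint PY B2
  dYc : Disjoint B1 B2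
  bal : PX.card = PY.card
  free1 : ∀ a ∈ A1, ∀ b ∈ B1, ¬ R.Adj a b
  free2 : ∀ a ∈ A2, ∀ b ∈ B2, ¬ R.Adj a b
  pathp : (PX = ∅ ∧ PY = ∅) ∨ ∃ u v, ∃ p : R.Walk u v, p.IsPath ∧
      side u = true ∧ side v = false ∧ p.support.toFinset = PX ∪ PY

lemma side_disjoint {side : V → Bool} {s t : Finset V}
    (hs : ∀ x ∈ s, side x = true) (ht : ∀ x ∈ t, side x = false) : Disjoint s t := by
  rw [Finset.disjoint_left]
  intro x hxs hxt
  have := hs x hxs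
  have := ht x hxt
  simp_all

lemma drop_ends {R : SimpleGraph V} {u v : V} (p : R.Walk u v) (hp : p.IsPath) :
    p.support = [u] ∨ p.support = [u, v] ∨
    ∃ m x, ∃ q : R.Walk m x, q.IsPath ∧ R.Adj u m ∧ R.Adj v x ∧
      p.support = u :: (q.support ++ [v]) := by
  cases p with
  | nil => left; rfl
  | @cons _ m _ h₁ p₁ =>
    cases p₁ with
    | nil => right; left; rfl
    | @cons _ m' _ h₂ p₂ =>
      obtain ⟨x, q, h', hc⟩ := SimpleGraph.Walk.exists_cons_eq_concat h₂ p₂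
      right; right
      have hsupp : (SimpleGraph.Walk.cons h₁ (SimpleGraph.Walk.cons h₂ p₂)).support
          = u :: (q.support ++ [v]) := by
        rw [SimpleGraph.Walk.support_cons, hc, SimpleGraph.Walk.support_concat]
      refine ⟨m, x, q, ?_, h₁, h'.symm, hsupp⟩
      rw [SimpleGraph.Walk.isPath_def] at hp ⊢
      rw [hsupp] at hp
      have := hp.of_cons
      exact (List.nodup_append.mp this).1

end Stmt16

open Finset

namespace Stmt16

variable {V : Type*} [DecidableEq V]

lemma step {R : SimpleGraph V} {side : V → Bool} {X Y PX PY A1 A2 B1 B2 : Finset V}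
    (hside : ∀ u v, R.Adj u v → side u ≠ side v)
    (hX : ∀ x ∈ X, side x = true) (hY : ∀ y ∈ Y, side y = false)
    (hcard : X.card ≤ Y.card)
    (C : Conf R side X Y PX PY A1 A2 B1 B2)
    (hbad : B1.card < A1.card) :
    ∃ PX' PY' A1' A2' B1' B2', Conf R side X Y PX' PY' A1' A2' B1' B2' ∧
      (A1'.card - B1'.card) + (A2'.card - B2'.card)
        < (A1.card - B1.card) + (A2.card - B2.card) := by
  obtain ⟨uX, uY, dXa, dXb, dXc, dYa, dYb, dYc, bal, free1, free2, pathp⟩ := C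
  -- subset facts
  have hPXX : PX ⊆ X := uX ▸ (subset_union_left.trans subset_union_left)
  have hA1X : A1 ⊆ X := uX ▸ (subset_union_right.trans subset_union_left)
  have hA2X : A2 ⊆ X := uX ▸ subset_union_right
  have hPYY : PY ⊆ Y := uY ▸ (subset_union_left.trans subset_union_left)
  have hB1Y : B1 ⊆ Y := uY ▸ (subset_union_right.trans subset_union_left)
  have hB2Y : B2 ⊆ Y := uY ▸ subset_union_right
  have sPX : ∀ x ∈ PX, side x = true := fun x hx => hX x (hPXX hx)
  have sA1 : ∀ x ∈ A1, side x = true := fun x hx => hX x (hA1X hx)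
  have sA2 : ∀ x ∈ A2, side x = true := fun x hx => hX x (hA2X hx)
  have sPY : ∀ x ∈ PY, side x = false := fun x hx => hY x (hPYY hx)
  have sB1 : ∀ x ∈ B1, side x = false := fun x hx => hY x (hB1Y hx)
  have sB2 : ∀ x ∈ B2, side x = false := fun x hx => hY x (hB2Y hx)
  -- card sums
  have hsX : PX.card + A1.card + A2.card = X.card := by
    rw [← uX, card_union_of_disjoint, card_union_of_disjoint dXa]
    · rw [disjoint_union_left]; exact ⟨dXb, dXc⟩
  have hsY : PY.card + B1.card + B2.card = Y.card := by
    rw [← uY, card_union_of_disjoint, card_union_of_disjoint dYa]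
    · rw [disjoint_union_left]; exact ⟨dYb, dYc⟩
  have hA2B2 : A2.card < B2.card := by omega
  by_cases h1 : ∃ a ∈ A1, ∀ b ∈ B2, ¬ R.Adj a b
  · obtain ⟨a, ha, haB2⟩ := h1
    refine ⟨PX, PY, A1.erase a, insert a A2, B1, B2, ⟨?_, uY, ?_, ?_, ?_, dYa, dYb, dYc,
      bal, ?_, ?_, pathp⟩, ?_⟩
    · rw [← uX]; ext x
      simp only [mem_union, mem_erase, mem_insert]
      by_cases hx : x = a <;> simp [hx, ha] <;> tauto
    · exact dXa.mono_right (erase_subset _ _)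
    · rw [disjoint_insert_right]
      exact ⟨fun h => (disjoint_left.mp dXa) h ha, dXb⟩
    · rw [disjoint_insert_right]
      exact ⟨fun h => (mem_erase.mp h).1 rfl, (dXc.mono_left (erase_subset _ _))⟩
    · exact fun x hx => free1 x (mem_erase.mp hx).2
    · intro x hx b hb
      rcases mem_insert.mp hx with rfl | hx
      · exact haB2 b hb
      · exact free2 x hx b hb
    · rw [card_erase_of_mem ha, card_insert_of_notMem (disjoint_left.mp dXc ha)]
      omega
  · push_neg at h1
    by_cases h2 : ∃ b ∈ B2, ∀ a ∈ A1, ¬ R.Adj a b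
    · obtain ⟨b, hb, hbA1⟩ := h2
      refine ⟨PX, PY, A1, A2, insert b B1, B2.erase b, ⟨uX, ?_, dXa, dXb, dXc, ?_, ?_, ?_,
        bal, ?_, ?_, pathp⟩, ?_⟩
      · rw [← uY]; ext y
        simp only [mem_union, mem_erase, mem_insert]
        by_cases hy : y = b <;> simp [hy, hb] <;> tauto
      · rw [disjoint_insert_right]
        exact ⟨fun h => (disjoint_left.mp dYb) h hb, dYa⟩
      · exact dYb.mono_right (erase_subset _ _)
      · rw [disjoint_insert_left]
        exact ⟨fun h => (mem_erase.mp h).1 rfl, (dYc.mono_right (erase_subset _ _))⟩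
      · intro x hx y hy
        rcases mem_insert.mp hy with rfl | hy
        · exact hbA1 x hx
        · exact free1 x hx y hy
      · exact fun x hx y hy => free2 x hx y (mem_erase.mp hy).2
      · rw [card_erase_of_mem hb, card_insert_of_notMem (disjoint_right.mp dYc hb)]
        omega
    · push_neg at h2
      have hA1ne : A1.Nonempty := card_pos.mp (by omega)
      rcases pathp with ⟨hPXe, hPYe⟩ | ⟨u, v, p, hp, hsu, hsv, hsupp⟩
      · -- create a single-edge path
        obtain ⟨a0, ha0⟩ := hA1ne
        obtain ⟨b0, hb0, hadj0⟩ := h1 a0 ha0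
        have hne : a0 ≠ b0 := by
          intro h; have := sA1 a0 ha0; rw [h, sB2 b0 hb0] at this; simp at this
        refine ⟨{a0}, {b0}, A1.erase a0, A2, B1, B2.erase b0, ⟨?_, ?_, ?_, ?_, ?_, ?_, ?_, ?_,
          rfl, ?_, ?_, Or.inr ⟨a0, b0, SimpleGraph.Walk.cons hadj0 SimpleGraph.Walk.nil,
            ?_, sA1 a0 ha0, sB2 b0 hb0, ?_⟩⟩, ?_⟩
        · rw [← uX, hPXe]; ext x
          simp only [mem_union, mem_erase, mem_singleton, notMem_empty]
          by_cases hx : x = a0 <;> simp [hx, ha0] <;> tauto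
        · rw [← uY, hPYe]; ext y
          simp only [mem_union, mem_erase, mem_singleton, notMem_empty]
          by_cases hy : y = b0 <;> simp [hy, hb0] <;> tauto
        · simp only [disjoint_singleton_left, mem_erase]; tauto
        · simp only [disjoint_singleton_left]
          exact disjoint_left.mp dXc ha0
        · exact dXc.mono_left (erase_subset _ _)
        · simp only [disjoint_singleton_left]
          exact disjoint_right.mp dYc hb0
        · simp only [disjoint_singleton_left, mem_erase]; tauto
        · exact dYc.mono_right (erase_subset _ _)
        · exact fun x hx => free1 x (mem_erase.mp hx).2
        · exact fun x hx y hy => free2 x hx y (mem_erase.mp hy).2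
        · rw [SimpleGraph.Walk.isPath_def]
          simp [hne]
        · simp only [SimpleGraph.Walk.support_cons, SimpleGraph.Walk.support_nil]
          ext z; simp
        · rw [card_erase_of_mem ha0, card_erase_of_mem hb0]
          omega
      · -- a path already exists
        have hmemPXPY : ∀ z ∈ p.support, z ∈ PX ∪ PY := by
          intro z hz
          rw [← hsupp]; exact List.mem_toFinset.mpr hz
        have huPX : u ∈ PX := by
          rcases mem_union.mp (hmemPXPY u p.start_mem_support) with h | h
          · exact h
          · have := sPY u h; rw [hsu] at this; simp at this
        have hvPY : v ∈ PY := by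
          rcases mem_union.mp (hmemPXPY v p.end_mem_support) with h | h
          · have := sPX v h; rw [hsv] at this; simp at this
          · exact h
        have hnotA1 : ∀ z ∈ p.support, z ∉ A1 := by
          intro z hz hzA
          rcases mem_union.mp (hmemPXPY z hz) with h | h
          · exact disjoint_left.mp dXa h hzA
          · have := sPY z h; rw [sA1 z hzA] at this; simp at this
        have hnotB2 : ∀ z ∈ p.support, z ∉ B2 := by
          intro z hz hzB
          rcases mem_union.mp (hmemPXPY z hz) with h | h
          · have := sPX z h; rw [sB2 z hzB] at this; simp at this
          · exact disjoint_left.mp dYb h hzB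
        -- common constructor for the two path-extension cases
        have key : ∀ a ∈ A1, ∀ b ∈ B2,
            (∃ u' v', ∃ p' : R.Walk u' v', p'.IsPath ∧ side u' = true ∧ side v' = false ∧
              p'.support.toFinset = insert a PX ∪ insert b PY) →
            ∃ PX' PY' A1' A2' B1' B2', Conf R side X Y PX' PY' A1' A2' B1' B2' ∧
              (A1'.card - B1'.card) + (A2'.card - B2'.card)
                < (A1.card - B1.card) + (A2.card - B2.card) := by
          intro a ha b hb hpath
          have haPX : a ∉ PX := disjoint_right.mp dXa ha
          have hbPY : b ∉ PY := disjoint_right.mp dYb hb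
          refine ⟨insert a PX, insert b PY, A1.erase a, A2, B1, B2.erase b,
            ⟨?_, ?_, ?_, ?_, ?_, ?_, ?_, ?_, ?_, ?_, ?_, Or.inr hpath⟩, ?_⟩
          · rw [← uX]; ext z
            simp only [mem_union, mem_erase, mem_insert]
            by_cases hz : z = a <;> simp [hz, ha] <;> tauto
          · rw [← uY]; ext z
            simp only [mem_union, mem_erase, mem_insert]
            by_cases hz : z = b <;> simp [hz, hb] <;> tauto
          · rw [disjoint_insert_left]
            exact ⟨fun h => (mem_erase.mp h).1 rfl, dXa.mono_right (erase_subset _ _)⟩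
          · rw [disjoint_insert_left]
            exact ⟨disjoint_left.mp dXc ha, dXb⟩
          · exact dXc.mono_left (erase_subset _ _)
          · rw [disjoint_insert_left]
            exact ⟨disjoint_right.mp dYc hb, dYa⟩
          · rw [disjoint_insert_left]
            exact ⟨fun h => (mem_erase.mp h).1 rfl, dYb.mono_right (erase_subset _ _)⟩
          · exact dYc.mono_right (erase_subset _ _)
          · rw [card_insert_of_notMem haPX, card_insert_of_notMem hbPY, bal]
          · exact fun z hz => free1 z (mem_erase.mp hz).2
          · exact fun z hz y hy => free2 z hz y (mem_erase.mp hy).2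
          · rw [card_erase_of_mem ha, card_erase_of_mem hb]
            omega
        by_cases h3 : ∃ a ∈ A1, R.Adj v a
        · obtain ⟨a, ha, hva⟩ := h3
          obtain ⟨b, hb, hab⟩ := h1 a ha
          have hanp : a ∉ p.support := fun h => hnotA1 a h ha
          have hbnp : b ∉ p.support := fun h => hnotB2 b h hb
          have hne2 : a ≠ b := by
            intro h; have := sA1 a ha; rw [h, sB2 b hb] at this; simp at this
          refine key a ha b hb ⟨u, b, (p.concat hva).concat hab, ?_, hsu, sB2 b hb, ?_⟩
          · rw [SimpleGraph.Walk.isPath_def, SimpleGraph.Walk.support_concat,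
              SimpleGraph.Walk.support_concat]
            have hnd := (SimpleGraph.Walk.isPath_def _).mp hp
            simp [List.nodup_append, hnd, hanp, hbnp, hne2]
            intro z hz
            exact ⟨fun h => hanp (h ▸ hz), fun h => hbnp (h ▸ hz)⟩
          · rw [SimpleGraph.Walk.support_concat, SimpleGraph.Walk.support_concat]
            ext z
            simp only [List.mem_toFinset, List.mem_append, List.mem_singleton, mem_union,
              mem_insert]
            constructor
            · rintro ((hz | rfl) | rfl)
              · rcases mem_union.mp (hmemPXPY z hz) with h | h
                · exact Or.inl (Or.inr h)
                · exact Or.inr (Or.inr h)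
              · exact Or.inl (Or.inl rfl)
              · exact Or.inr (Or.inl rfl)
            · have hPXm : ∀ w, w ∈ PX ∨ w ∈ PY → w ∈ p.support := by
                intro w hw
                have : w ∈ PX ∪ PY := mem_union.mpr hw
                rw [← hsupp] at this; exact List.mem_toFinset.mp this
              rintro ((rfl | hz) | (rfl | hz))
              · exact Or.inl (Or.inr rfl)
              · exact Or.inl (Or.inl (hPXm z (Or.inl hz)))
              · exact Or.inr rfl
              · exact Or.inl (Or.inl (hPXm z (Or.inr hz)))
        · push_neg at h3
          by_cases h4 : ∃ b ∈ B2, R.Adj u b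
          · obtain ⟨b, hb, hub⟩ := h4
            obtain ⟨a, ha, hab⟩ := h2 b hb
            have hanp : a ∉ p.support := fun h => hnotA1 a h ha
            have hbnp : b ∉ p.support := fun h => hnotB2 b h hb
            have hne2 : a ≠ b := by
              intro h; have := sA1 a ha; rw [h, sB2 b hb] at this; simp at this
            refine key a ha b hb
              ⟨a, v, SimpleGraph.Walk.cons hab (SimpleGraph.Walk.cons hub.symm p),
                ?_, sA1 a ha, hsv, ?_⟩
            · rw [SimpleGraph.Walk.isPath_def, SimpleGraph.Walk.support_cons,
                SimpleGraph.Walk.support_cons]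
              have hnd := (SimpleGraph.Walk.isPath_def _).mp hp
              simp [hnd, hanp, hbnp, hne2]
            · rw [SimpleGraph.Walk.support_cons, SimpleGraph.Walk.support_cons]
              ext z
              simp only [List.mem_toFinset, List.mem_cons, mem_union, mem_insert]
              constructor
              · rintro (rfl | rfl | hz)
                · exact Or.inl (Or.inl rfl)
                · exact Or.inr (Or.inl rfl)
                · rcases mem_union.mp (hmemPXPY z hz) with h | h
                  · exact Or.inl (Or.inr h)
                  · exact Or.inr (Or.inr h)
              · have hPXm : ∀ w, w ∈ PX ∨ w ∈ PY → w ∈ p.support := by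
                  intro w hw
                  have : w ∈ PX ∪ PY := mem_union.mpr hw
                  rw [← hsupp] at this; exact List.mem_toFinset.mp this
                rintro ((rfl | hz) | (rfl | hz))
                · exact Or.inl rfl
                · exact Or.inr (Or.inr (hPXm z (Or.inl hz)))
                · exact Or.inr (Or.inl rfl)
                · exact Or.inr (Or.inr (hPXm z (Or.inr hz)))
          · push_neg at h4
            have hne : u ≠ v := by
              intro h; rw [h, hsv] at hsu; simp at hsu
            rcases drop_ends p hp with hs1 | hs2 | ⟨m, x, q, hq, hum, hvx, hsupp2⟩
            · exfalso
              have := p.end_mem_support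
              rw [hs1] at this
              simp at this
              exact hne this.symm
            · -- support = [u, v] : path shrinks to nothing
              have hPXu : PX = {u} := by
                ext z
                simp only [mem_singleton]
                constructor
                · intro hz
                  have : z ∈ p.support := by
                    have : z ∈ PX ∪ PY := mem_union.mpr (Or.inl hz)
                    rw [← hsupp] at this; exact List.mem_toFinset.mp this
                  rw [hs2] at this
                  simp only [List.mem_cons, List.mem_singleton, List.not_mem_nil,
                    or_false] at this
                  rcases this with h | h
                  · exact h
                  · exfalso
                    have := sPX z hz; rw [h, hsv] at this; simp at this
                · rintro rfl; exact huPX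
              have hPYv : PY = {v} := by
                ext z
                simp only [mem_singleton]
                constructor
                · intro hz
                  have : z ∈ p.support := by
                    have : z ∈ PX ∪ PY := mem_union.mpr (Or.inr hz)
                    rw [← hsupp] at this; exact List.mem_toFinset.mp this
                  rw [hs2] at this
                  simp only [List.mem_cons, List.mem_singleton, List.not_mem_nil,
                    or_false] at this
                  rcases this with h | h
                  · exfalso
                    have := sPY z hz; rw [h, hsu] at this; simp at this
                  · exact h
                · rintro rfl; exact hvPY
              have hunA2 : u ∉ A2 := disjoint_left.mp dXb (hPXu ▸ mem_singleton_self u)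
              have hvnB1 : v ∉ B1 := disjoint_left.mp dYa (hPYv ▸ mem_singleton_self v)
              refine ⟨∅, ∅, A1, insert u A2, insert v B1, B2,
                ⟨?_, ?_, ?_, ?_, ?_, ?_, ?_, ?_, rfl, ?_, ?_, Or.inl ⟨rfl, rfl⟩⟩, ?_⟩
              · rw [← uX, hPXu]; ext z
                simp only [mem_union, mem_insert, mem_singleton, notMem_empty]
                tauto
              · rw [← uY, hPYv]; ext z
                simp only [mem_union, mem_insert, mem_singleton, notMem_empty]
                tauto
              · simp
              · simp
              · rw [disjoint_insert_right]
                refine ⟨fun h => hnotA1 u p.start_mem_support h, dXc⟩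
              · simp
              · simp
              · rw [disjoint_insert_left]
                refine ⟨fun h => hnotB2 v p.end_mem_support h, dYc⟩
              · intro z hz y hy
                rcases mem_insert.mp hy with rfl | hy
                · exact fun h => h3 z hz h.symm
                · exact free1 z hz y hy
              · intro z hz y hy
                rcases mem_insert.mp hz with rfl | hz
                · exact h4 y hy
                · exact free2 z hz y hy
              · rw [card_insert_of_notMem hunA2, card_insert_of_notMem hvnB1]
                omega
            · -- general surgery: drop both endpoints
              have hnd := (SimpleGraph.Walk.isPath_def _).mp hp
              rw [hsupp2] at hnd
              have hunq : u ∉ q.support := by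
                intro h
                exact (List.nodup_cons.mp hnd).1 (List.mem_append.mpr (Or.inl h))
              have hvnq : v ∉ q.support := by
                have := (List.nodup_cons.mp hnd).2
                intro h
                rcases List.nodup_append'.mp this with ⟨_, _, hdisj⟩
                exact hdisj h (List.mem_singleton_self v)
              have hsm : side m = false := by
                have := hside u m hum
                cases hm : side m
                · rfl
                · rw [hsu, hm] at this; simp at this
              have hsx : side x = true := by
                have := hside v x hvx
                cases hx : side x
                · rw [hsv, hx] at this; simp at this
                · rfl
              have hqPXPY : q.support.toFinset = PX.erase u ∪ PY.erase v := by
                ext z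
                simp only [List.mem_toFinset, mem_union, mem_erase]
                constructor
                · intro hz
                  have hzp : z ∈ p.support := by
                    rw [hsupp2]; right; exact List.mem_append.mpr (Or.inl hz)
                  have hzu : z ≠ u := fun h => hunq (h ▸ hz)
                  have hzv : z ≠ v := fun h => hvnq (h ▸ hz)
                  rcases mem_union.mp (hmemPXPY z hzp) with h | h
                  · exact Or.inl ⟨hzu, h⟩
                  · exact Or.inr ⟨hzv, h⟩
                · intro hz
                  have hzp : z ∈ p.support := by
                    rcases hz with ⟨_, h⟩ | ⟨_, h⟩
                    · have : z ∈ PX ∪ PY := mem_union.mpr (Or.inl h)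
                      rw [← hsupp] at this; exact List.mem_toFinset.mp this
                    · have : z ∈ PX ∪ PY := mem_union.mpr (Or.inr h)
                      rw [← hsupp] at this; exact List.mem_toFinset.mp this
                  rw [hsupp2] at hzp
                  simp only [List.mem_cons] at hzp
                  rcases hzp with rfl | hzp
                  · rcases hz with ⟨hzu, _⟩ | ⟨_, h⟩
                    · exact absurd rfl hzu
                    · exfalso
                      have := sPY z h; rw [hsu] at this; simp at this
                  · rcases List.mem_append.mp hzp with h | h
                    · exact h
                    · simp only [List.mem_singleton] at h
                      subst h
                      rcases hz with ⟨_, h⟩ | ⟨hzv, _⟩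
                      · exfalso
                        have := sPX z h; rw [hsv] at this; simp at this
                      · exact absurd rfl hzv
              have hunA2 : u ∉ A2 := disjoint_left.mp dXb huPX
              have hvnB1 : v ∉ B1 := disjoint_left.mp dYa hvPY
              refine ⟨PX.erase u, PY.erase v, A1, insert u A2, insert v B1, B2,
                ⟨?_, ?_, ?_, ?_, ?_, ?_, ?_, ?_, ?_, ?_, ?_,
                  Or.inr ⟨x, m, q.reverse, hq.reverse, hsx, hsm, ?_⟩⟩, ?_⟩
              · rw [← uX]; ext z
                simp only [mem_union, mem_erase, mem_insert]
                by_cases hz : z = u <;> simp [hz, huPX] <;> tauto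
              · rw [← uY]; ext z
                simp only [mem_union, mem_erase, mem_insert]
                by_cases hz : z = v <;> simp [hz, hvPY] <;> tauto
              · exact dXa.mono_left (erase_subset _ _)
              · rw [disjoint_insert_right]
                exact ⟨fun h => (mem_erase.mp h).1 rfl, dXb.mono_left (erase_subset _ _)⟩
              · rw [disjoint_insert_right]
                exact ⟨fun h => hnotA1 u p.start_mem_support h, dXc⟩
              · rw [disjoint_insert_right]
                exact ⟨fun h => (mem_erase.mp h).1 rfl, dYa.mono_left (erase_subset _ _)⟩
              · exact dYb.mono_left (erase_subset _ _)
              · rw [disjoint_insert_left]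
                exact ⟨fun h => hnotB2 v p.end_mem_support h, dYc⟩
              · rw [card_erase_of_mem huPX, card_erase_of_mem hvPY, bal]
              · intro z hz y hy
                rcases mem_insert.mp hy with rfl | hy
                · exact fun h => h3 z hz h.symm
                · exact free1 z hz y hy
              · intro z hz y hy
                rcases mem_insert.mp hz with rfl | hz
                · exact h4 y hy
                · exact free2 z hz y hy
              · rw [SimpleGraph.Walk.support_reverse, List.toFinset_reverse]
                exact hqPXPY
              · have hu : u ∈ PX := huPX
                have hv : v ∈ PY := hvPY
                rw [card_insert_of_notMem hunA2, card_insert_of_notMem hvnB1]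
                omega

end Stmt16
namespace Stmt16

variable {V : Type*} [DecidableEq V]

lemma conf_swap {R : SimpleGraph V} {side : V → Bool} {X Y PX PY A1 A2 B1 B2 : Finset V}
    (C : Conf R side X Y PX PY A1 A2 B1 B2) :
    Conf R side X Y PX PY A2 A1 B2 B1 := by
  obtain ⟨uX, uY, dXa, dXb, dXc, dYa, dYb, dYc, bal, free1, free2, pathp⟩ := C
  refine ⟨?_, ?_, dXb, dXa, dXc.symm, dYb, dYa, dYc.symm, bal, free2, free1, pathp⟩
  · rw [← uX]; ext z; simp only [mem_union]; tauto
  · rw [← uY]; ext z; simp only [mem_union]; tauto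

lemma claimC_aux {R : SimpleGraph V} {side : V → Bool} {X Y : Finset V}
    (hside : ∀ u v, R.Adj u v → side u ≠ side v)
    (hX : ∀ x ∈ X, side x = true) (hY : ∀ y ∈ Y, side y = false)
    (hcard : X.card ≤ Y.card) :
    ∀ k (PX PY A1 A2 B1 B2 : Finset V), Conf R side X Y PX PY A1 A2 B1 B2 →
      (A1.card - B1.card) + (A2.card - B2.card) ≤ k →
      ∃ PX' PY' A1' A2' B1' B2', Conf R side X Y PX' PY' A1' A2' B1' B2' ∧
        A1'.card ≤ B1'.card ∧ A2'.card ≤ B2'.card := by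
  intro k
  induction k with
  | zero =>
    intro PX PY A1 A2 B1 B2 C h
    exact ⟨PX, PY, A1, A2, B1, B2, C, by omega, by omega⟩
  | succ k ih =>
    intro PX PY A1 A2 B1 B2 C h
    by_cases h1 : A1.card ≤ B1.card ∧ A2.card ≤ B2.card
    · exact ⟨PX, PY, A1, A2, B1, B2, C, h1.1, h1.2⟩
    · rw [not_and_or] at h1
      rcases h1 with h1 | h1
      · obtain ⟨PX', PY', A1', A2', B1', B2', C', hlt⟩ :=
          step hside hX hY hcard C (by omega)
        exact ih PX' PY' A1' A2' B1' B2' C' (by omega)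
      · obtain ⟨PX', PY', A1', A2', B1', B2', C', hlt⟩ :=
          step hside hX hY hcard (conf_swap C) (by omega)
        obtain ⟨PX'', PY'', A1'', A2'', B1'', B2'', C'', hle1, hle2⟩ :=
          ih PX' PY' A2' A1' B2' B1' (conf_swap C') (by omega)
        exact ⟨PX'', PY'', A1'', A2'', B1'', B2'', C'', hle1, hle2⟩

lemma claimC {R : SimpleGraph V} {side : V → Bool} {X Y : Finset V}
    (hside : ∀ u v, R.Adj u v → side u ≠ side v)
    (hX : ∀ x ∈ X, side x = true) (hY : ∀ y ∈ Y, side y = false)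
    (hcard : X.card ≤ Y.card) :
    ∃ PX PY A1 A2 B1 B2, Conf R side X Y PX PY A1 A2 B1 B2 ∧
      A1.card ≤ B1.card ∧ A2.card ≤ B2.card := by
  have Cinit : Conf R side X Y ∅ ∅ X ∅ ∅ Y := by
    refine ⟨?_, ?_, ?_, ?_, ?_, ?_, ?_, ?_, rfl, ?_, ?_, Or.inl ⟨rfl, rfl⟩⟩ <;>
      simp [side_disjoint hX hY]
  exact claimC_aux hside hX hY hcard _ ∅ ∅ X ∅ ∅ Y Cinit le_rfl

/-- zigzag walk through two lists -/
lemma zigzag {R : SimpleGraph V} :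
    ∀ (la lb : List V) (a b : V), la.length = lb.length →
      (∀ x ∈ a :: la, ∀ y ∈ b :: lb, R.Adj x y) →
      ∃ (w : V) (p : R.Walk a w), p.support.Perm ((a :: la) ++ (b :: lb)) := by
  intro la
  induction la with
  | nil =>
    intro lb a b hlen hadj
    have : lb = [] := List.length_eq_zero_iff.mp hlen.symm
    subst this
    refine ⟨b, SimpleGraph.Walk.cons (hadj a (by simp) b (by simp)) SimpleGraph.Walk.nil, ?_⟩
    simp
  | cons a' la' ih =>
    intro lb a b hlen hadj
    cases lb with
    | nil => simp at hlen
    | cons b' lb' =>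
      obtain ⟨w, p, hperm⟩ := ih lb' a' b' (by simpa using hlen)
        (fun x hx y hy => hadj x (List.mem_cons_of_mem _ hx) y (List.mem_cons_of_mem _ hy))
      have hab : R.Adj a b := hadj a (by simp) b (by simp)
      have hba' : R.Adj b a' := (hadj a' (by simp) b (by simp)).symm
      refine ⟨w, SimpleGraph.Walk.cons hab (SimpleGraph.Walk.cons hba' p), ?_⟩
      rw [SimpleGraph.Walk.support_cons, SimpleGraph.Walk.support_cons]
      have h1 : (b :: p.support).Perm ((a' :: la') ++ (b :: b' :: lb')) :=
        (hperm.cons b).trans List.perm_middle.symm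
      exact h1.cons a

/-- One colour class on a complete-bipartite pair gives a path plus leftovers. -/
lemma monoPath {R : SimpleGraph V} {A B : Finset V} (hdisj : Disjoint A B)
    (hcard : A.card ≤ B.card) (hadj : ∀ a ∈ A, ∀ b ∈ B, R.Adj a b) :
    ∃ S L : Finset V, S ∪ L = A ∪ B ∧ Disjoint S L ∧ L ⊆ B ∧
      L.card + A.card = B.card ∧ FinPathSet R S := by
  obtain ⟨B', hB'sub, hB'card⟩ := Finset.exists_subset_card_eq hcard
  rcases eq_or_ne A ∅ with rfl | hAne
  · have : B' = ∅ := by simpa using hB'card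
    subst this
    exact ⟨∅, B, by simp, by simp, le_rfl, by simp, Or.inl rfl⟩
  · have hA : A.Nonempty := nonempty_iff_ne_empty.mpr hAne
    have hB' : B'.Nonempty := card_pos.mp (hB'card ▸ card_pos.mpr hA)
    have hdisj' : Disjoint A B' := hdisj.mono_right hB'sub
    refine ⟨A ∪ B', B \ B', ?_, ?_, sdiff_subset, ?_, ?_⟩
    · ext z; simp only [mem_union, mem_sdiff]
      constructor
      · rintro ((h | h) | ⟨h, _⟩)
        · exact Or.inl h
        · exact Or.inr (hB'sub h)
        · exact Or.inr h
      · rintro (h | h)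
        · exact Or.inl (Or.inl h)
        · by_cases hz : z ∈ B'
          · exact Or.inl (Or.inr hz)
          · exact Or.inr ⟨h, hz⟩
    · rw [disjoint_union_left]
      exact ⟨hdisj.mono_right sdiff_subset, sdiff_disjoint.symm⟩
    · rw [card_sdiff_of_subset hB'sub, hB'card]
      omega
    · -- the path
      obtain ⟨a, la, hla⟩ := List.exists_cons_of_ne_nil
        (by rw [Ne, Finset.toList_eq_nil]; exact hA.ne_empty : A.toList ≠ [])
      obtain ⟨b, lb, hlb⟩ := List.exists_cons_of_ne_nil
        (by rw [Ne, Finset.toList_eq_nil]; exact hB'.ne_empty : B'.toList ≠ [])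
      have hlen : la.length = lb.length := by
        have h1 : (a :: la).length = A.card := by rw [← hla, Finset.length_toList]
        have h2 : (b :: lb).length = B'.card := by rw [← hlb, Finset.length_toList]
        simp only [List.length_cons] at h1 h2
        omega
      have hadj' : ∀ x ∈ a :: la, ∀ y ∈ b :: lb, R.Adj x y := by
        intro x hx y hy
        have hxA : x ∈ A := by rw [← Finset.mem_toList, hla]; exact hx
        have hyB : y ∈ B' := by rw [← Finset.mem_toList, hlb]; exact hy
        exact hadj x hxA y (hB'sub hyB)
      obtain ⟨w, p, hperm⟩ := zigzag la lb a b hlen hadj'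
      refine Or.inr ⟨a, w, p, ?_, ?_⟩
      · rw [SimpleGraph.Walk.isPath_def]
        refine hperm.nodup_iff.mpr ?_
        rw [← hla, ← hlb, List.nodup_append']
        refine ⟨A.nodup_toList, B'.nodup_toList, ?_⟩
        intro x hx hx'
        exact disjoint_left.mp hdisj' (Finset.mem_toList.mp hx) (Finset.mem_toList.mp hx')
      · rw [List.toFinset_eq_of_perm _ _ hperm, ← hla, ← hlb, List.toFinset_append,
          Finset.toList_toFinset, Finset.toList_toFinset]

end Stmt16
namespace Stmt16

variable {V : Type*} [DecidableEq V]

lemma conf_pathset {R : SimpleGraph V} {side : V → Bool} {X Y PX PY A1 A2 B1 B2 : Finset V}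
    (C : Conf R side X Y PX PY A1 A2 B1 B2) : IsPathSet R ↑(PX ∪ PY) := by
  rcases C.pathp with ⟨h1, h2⟩ | ⟨u, v, p, hp, _, _, hs⟩
  · left; rw [h1, h2]; simp
  · right
    refine ⟨u, v, p, hp, ?_⟩
    rw [← hs]
    ext z; simp

lemma finpathset_isPathSet {R : SimpleGraph V} {S : Finset V} (h : FinPathSet R S) :
    IsPathSet R ↑S := by
  rcases h with rfl | ⟨u, v, p, hp, hs⟩
  · left; simp
  · right; refine ⟨u, v, p, hp, ?_⟩; rw [← hs]; ext z; simp


lemma conf_cardX {R : SimpleGraph V} {side : V → Bool} {X Y PX PY A1 A2 B1 B2 : Finset V}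
    (C : Conf R side X Y PX PY A1 A2 B1 B2) :
    PX.card + A1.card + A2.card = X.card ∧ PY.card + B1.card + B2.card = Y.card := by
  constructor
  · rw [← C.uX, card_union_of_disjoint, card_union_of_disjoint C.dXa]
    rw [disjoint_union_left]; exact ⟨C.dXb, C.dXc⟩
  · rw [← C.uY, card_union_of_disjoint, card_union_of_disjoint C.dYa]
    rw [disjoint_union_left]; exact ⟨C.dYb, C.dYc⟩

lemma monoPath_A_sub {A B S L : Finset V} (hu : S ∪ L = A ∪ B) (hL : L ⊆ B)
    (hdisj : Disjoint A B) : A ⊆ S := by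
  intro a ha
  have : a ∈ S ∪ L := by rw [hu]; exact mem_union_left _ ha
  rcases mem_union.mp this with h | h
  · exact h
  · exact absurd (hL h) (disjoint_left.mp hdisj ha)

lemma disjU {s1 s2 t1 t2 : Finset V} (h11 : Disjoint s1 t1) (h12 : Disjoint s1 t2)
    (h21 : Disjoint s2 t1) (h22 : Disjoint s2 t2) : Disjoint (s1 ∪ s2) (t1 ∪ t2) := by
  simp only [disjoint_union_left, disjoint_union_right]
  tauto

lemma eight_disjoint {α : Type*} {F0 F1 F2 F3 F4 F5 F6 F7 : Set α}
    (d01 : Disjoint F0 F1) (d02 : Disjoint F0 F2) (d03 : Disjoint F0 F3)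
    (d04 : Disjoint F0 F4) (d05 : Disjoint F0 F5) (d06 : Disjoint F0 F6)
    (d07 : Disjoint F0 F7) (d12 : Disjoint F1 F2) (d13 : Disjoint F1 F3)
    (d14 : Disjoint F1 F4) (d15 : Disjoint F1 F5) (d16 : Disjoint F1 F6)
    (d17 : Disjoint F1 F7) (d23 : Disjoint F2 F3) (d24 : Disjoint F2 F4)
    (d25 : Disjoint F2 F5) (d26 : Disjoint F2 F6) (d27 : Disjoint F2 F7)
    (d34 : Disjoint F3 F4) (d35 : Disjoint F3 F5) (d36 : Disjoint F3 F6)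
    (d37 : Disjoint F3 F7) (d45 : Disjoint F4 F5) (d46 : Disjoint F4 F6)
    (d47 : Disjoint F4 F7) (d56 : Disjoint F5 F6) (d57 : Disjoint F5 F7)
    (d67 : Disjoint F6 F7) :
    ∀ i j : Fin 8, i ≠ j →
      Disjoint (![F0, F1, F2, F3, F4, F5, F6, F7] i) (![F0, F1, F2, F3, F4, F5, F6, F7] j) := by
  intro i j hij
  fin_cases i <;> fin_cases j <;>
    first
      | exact absurd rfl hij
      | solve_by_elim [Disjoint.symm]

lemma eight_union {α : Type*} [DecidableEq α] [Fintype α] {F0 F1 F2 F3 F4 F5 F6 F7 : Finset α}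
    (h : F0 ∪ F1 ∪ F2 ∪ F3 ∪ F4 ∪ F5 ∪ F6 ∪ F7 = Finset.univ) :
    (⋃ i, (![(↑F0 : Set α), ↑F1, ↑F2, ↑F3, ↑F4, ↑F5, ↑F6, ↑F7] i)) = Set.univ := by
  rw [Set.eq_univ_iff_forall]
  intro z
  have hz : z ∈ F0 ∪ F1 ∪ F2 ∪ F3 ∪ F4 ∪ F5 ∪ F6 ∪ F7 := by
    rw [h]; exact Finset.mem_univ z
  simp only [Finset.mem_union] at hz
  simp only [Set.mem_iUnion]
  rcases hz with (((((((hz | hz) | hz) | hz) | hz) | hz) | hz) | hz)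
  exacts [⟨0, Finset.mem_coe.mpr hz⟩, ⟨1, Finset.mem_coe.mpr hz⟩,
    ⟨2, Finset.mem_coe.mpr hz⟩, ⟨3, Finset.mem_coe.mpr hz⟩, ⟨4, Finset.mem_coe.mpr hz⟩,
    ⟨5, Finset.mem_coe.mpr hz⟩, ⟨6, Finset.mem_coe.mpr hz⟩, ⟨7, Finset.mem_coe.mpr hz⟩]

end Stmt16

theorem statement16' {n t : ℕ} (c : Fin n → Fin (n + t) → Fin 3) :
    ∃ P : Fin 8 → Set (Fin n ⊕ Fin (n + t)),
      IsPathSet (bipColour c 0) (P 0) ∧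
      IsPathSet (bipColour c 1) (P 1) ∧
      IsPathSet (bipColour c 1) (P 2) ∧
      IsPathSet (bipColour c 2) (P 3) ∧
      IsPathSet (bipColour c 2) (P 4) ∧
      IsPathSet (bipColour c 2) (P 5) ∧
      IsPathSet (bipColour c 2) (P 6) ∧
      (P 7).ncard = t ∧
      (∀ i j, i ≠ j → Disjoint (P i) (P j)) ∧
      (⋃ i, P i) = Set.univ := by
  classical
  set V := Fin n ⊕ Fin (n + t) with hV
  let side : V → Bool := Sum.isLeft
  let X : Finset V := Finset.univ.map ⟨Sum.inl, Sum.inl_injective⟩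
  let Y : Finset V := Finset.univ.map ⟨Sum.inr, Sum.inr_injective⟩
  have hXmem : ∀ z : V, z ∈ X ↔ ∃ a, z = Sum.inl a := by
    intro z; simp [X, eq_comm]
  have hYmem : ∀ z : V, z ∈ Y ↔ ∃ b, z = Sum.inr b := by
    intro z; simp [Y, eq_comm]
  have hX : ∀ x ∈ X, side x = true := by
    intro x hx; obtain ⟨a, rfl⟩ := (hXmem x).mp hx; rfl
  have hY : ∀ y ∈ Y, side y = false := by
    intro y hy; obtain ⟨b, rfl⟩ := (hYmem y).mp hy; rfl
  have hside : ∀ i : Fin 3, ∀ u v : V, (bipColour c i).Adj u v → side u ≠ side v := by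
    intro i u v huv
    cases u <;> cases v <;> first | exact huv.elim | simp [side]
  have hXcard : X.card = n := by simp [X]
  have hYcard : Y.card = n + t := by simp [Y]
  have hcard : X.card ≤ Y.card := by omega
  -- level 0 : red
  obtain ⟨P0X, P0Y, A1, A2, B1, B2, C0, hc1, hc2⟩ :=
    Stmt16.claimC (R := bipColour c 0) (hside 0) hX hY hcard
  have hA1X : A1 ⊆ X := C0.uX ▸ (Finset.subset_union_right.trans Finset.subset_union_left)
  have hA2X : A2 ⊆ X := C0.uX ▸ Finset.subset_union_right
  have hP0XX : P0X ⊆ X := C0.uX ▸ (Finset.subset_union_left.trans Finset.subset_union_left)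
  have hB1Y : B1 ⊆ Y := C0.uY ▸ (Finset.subset_union_right.trans Finset.subset_union_left)
  have hB2Y : B2 ⊆ Y := C0.uY ▸ Finset.subset_union_right
  have hP0YY : P0Y ⊆ Y := C0.uY ▸ (Finset.subset_union_left.trans Finset.subset_union_left)
  -- level 1 : blue on (A1,B1) and (A2,B2)
  obtain ⟨Q1X, Q1Y, A11, A12, B11, B12, C1, hc11, hc12⟩ :=
    Stmt16.claimC (R := bipColour c 1) (hside 1)
      (fun x hx => hX x (hA1X hx)) (fun y hy => hY y (hB1Y hy)) hc1
  obtain ⟨Q2X, Q2Y, A21, A22, B21, B22, C2, hc21, hc22⟩ :=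
    Stmt16.claimC (R := bipColour c 1) (hside 1)
      (fun x hx => hX x (hA2X hx)) (fun y hy => hY y (hB2Y hy)) hc2
  have hQ1X : Q1X ⊆ A1 := C1.uX ▸ (Finset.subset_union_left.trans Finset.subset_union_left)
  have hA11 : A11 ⊆ A1 := C1.uX ▸ (Finset.subset_union_right.trans Finset.subset_union_left)
  have hA12 : A12 ⊆ A1 := C1.uX ▸ Finset.subset_union_right
  have hQ1Y : Q1Y ⊆ B1 := C1.uY ▸ (Finset.subset_union_left.trans Finset.subset_union_left)
  have hB11 : B11 ⊆ B1 := C1.uY ▸ (Finset.subset_union_right.trans Finset.subset_union_left)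
  have hB12 : B12 ⊆ B1 := C1.uY ▸ Finset.subset_union_right
  have hQ2X : Q2X ⊆ A2 := C2.uX ▸ (Finset.subset_union_left.trans Finset.subset_union_left)
  have hA21 : A21 ⊆ A2 := C2.uX ▸ (Finset.subset_union_right.trans Finset.subset_union_left)
  have hA22 : A22 ⊆ A2 := C2.uX ▸ Finset.subset_union_right
  have hQ2Y : Q2Y ⊆ B2 := C2.uY ▸ (Finset.subset_union_left.trans Finset.subset_union_left)
  have hB21 : B21 ⊆ B2 := C2.uY ▸ (Finset.subset_union_right.trans Finset.subset_union_left)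
  have hB22 : B22 ⊆ B2 := C2.uY ▸ Finset.subset_union_right
  -- the leftover pairs are all green
  have hgreen : ∀ {A' B' : Finset V}, A' ⊆ A1 → B' ⊆ B1 →
      (∀ a ∈ A', ∀ b ∈ B', ¬ (bipColour c 1).Adj a b) →
      ∀ a ∈ A', ∀ b ∈ B', (bipColour c 2).Adj a b := by
    intro A' B' hA' hB' hfree a ha b hb
    obtain ⟨a', rfl⟩ := (hXmem a).mp (hA1X (hA' ha))
    obtain ⟨b', rfl⟩ := (hYmem b).mp (hB1Y (hB' hb))
    have h0 : ¬ c a' b' = 0 := C0.free1 _ (hA' ha) _ (hB' hb)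
    have h1 : ¬ c a' b' = 1 := hfree _ ha _ hb
    show c a' b' = 2
    have hlt := (c a' b').isLt
    have hv0 : (c a' b').val ≠ 0 := fun h => h0 (Fin.ext h)
    have hv1 : (c a' b').val ≠ 1 := fun h => h1 (Fin.ext h)
    exact Fin.ext (by omega)
  have hgreen2 : ∀ {A' B' : Finset V}, A' ⊆ A2 → B' ⊆ B2 →
      (∀ a ∈ A', ∀ b ∈ B', ¬ (bipColour c 1).Adj a b) →
      ∀ a ∈ A', ∀ b ∈ B', (bipColour c 2).Adj a b := by
    intro A' B' hA' hB' hfree a ha b hb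
    obtain ⟨a', rfl⟩ := (hXmem a).mp (hA2X (hA' ha))
    obtain ⟨b', rfl⟩ := (hYmem b).mp (hB2Y (hB' hb))
    have h0 : ¬ c a' b' = 0 := C0.free2 _ (hA' ha) _ (hB' hb)
    have h1 : ¬ c a' b' = 1 := hfree _ ha _ hb
    show c a' b' = 2
    have hlt := (c a' b').isLt
    have hv0 : (c a' b').val ≠ 0 := fun h => h0 (Fin.ext h)
    have hv1 : (c a' b').val ≠ 1 := fun h => h1 (Fin.ext h)
    exact Fin.ext (by omega)
  -- side-based disjointness helper
  have sd : ∀ {s u : Finset V}, s ⊆ X → u ⊆ Y → Disjoint s u := by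
    intro s u hs hu
    exact Stmt16.side_disjoint (side := side) (fun z hz => hX z (hs hz)) (fun z hz => hY z (hu hz))
  -- level 2 : green paths
  obtain ⟨S11, L11, hu11, hd11, hL11, hcard11, hp11⟩ :=
    Stmt16.monoPath (R := bipColour c 2) (sd (hA11.trans hA1X) (hB11.trans hB1Y)) hc11
      (hgreen hA11 hB11 C1.free1)
  obtain ⟨S12, L12, hu12, hd12, hL12, hcard12, hp12⟩ :=
    Stmt16.monoPath (R := bipColour c 2) (sd (hA12.trans hA1X) (hB12.trans hB1Y)) hc12
      (hgreen hA12 hB12 C1.free2)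
  obtain ⟨S21, L21, hu21, hd21, hL21, hcard21, hp21⟩ :=
    Stmt16.monoPath (R := bipColour c 2) (sd (hA21.trans hA2X) (hB21.trans hB2Y)) hc21
      (hgreen2 hA21 hB21 C2.free1)
  obtain ⟨S22, L22, hu22, hd22, hL22, hcard22, hp22⟩ :=
    Stmt16.monoPath (R := bipColour c 2) (sd (hA22.trans hA2X) (hB22.trans hB2Y)) hc22
      (hgreen2 hA22 hB22 C2.free2)
  -- A parts are inside S parts
  have hAS11 : A11 ⊆ S11 := Stmt16.monoPath_A_sub hu11 hL11 (sd (hA11.trans hA1X) (hB11.trans hB1Y))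
  have hAS12 : A12 ⊆ S12 := Stmt16.monoPath_A_sub hu12 hL12 (sd (hA12.trans hA1X) (hB12.trans hB1Y))
  have hAS21 : A21 ⊆ S21 := Stmt16.monoPath_A_sub hu21 hL21 (sd (hA21.trans hA2X) (hB21.trans hB2Y))
  have hAS22 : A22 ⊆ S22 := Stmt16.monoPath_A_sub hu22 hL22 (sd (hA22.trans hA2X) (hB22.trans hB2Y))
  -- define the eight pieces
  set F0 : Finset V := P0X ∪ P0Y with hF0
  set F1 : Finset V := Q1X ∪ Q1Y with hF1
  set F2 : Finset V := Q2X ∪ Q2Y with hF2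
  set F7 : Finset V := L11 ∪ L12 ∪ L21 ∪ L22 with hF7
  -- bounding boxes
  have hS11b : S11 ⊆ A11 ∪ B11 := by rw [← hu11]; exact subset_union_left
  have hS12b : S12 ⊆ A12 ∪ B12 := by rw [← hu12]; exact subset_union_left
  have hS21b : S21 ⊆ A21 ∪ B21 := by rw [← hu21]; exact subset_union_left
  have hS22b : S22 ⊆ A22 ∪ B22 := by rw [← hu22]; exact subset_union_left
  have hF7b : F7 ⊆ B11 ∪ B12 ∪ B21 ∪ B22 :=
    Finset.union_subset (Finset.union_subset (Finset.union_subset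
      (hL11.trans (by intro z hz; exact mem_union_left _ (mem_union_left _ (mem_union_left _ hz))))
      (hL12.trans (by intro z hz; exact mem_union_left _ (mem_union_left _ (mem_union_right _ hz)))))
      (hL21.trans (by intro z hz; exact mem_union_left _ (mem_union_right _ hz))))
      (hL22.trans (by intro z hz; exact mem_union_right _ hz))
  -- basic X-side cell disjointness
  have dP0Q1 : Disjoint P0X Q1X := C0.dXa.mono_right hQ1X
  have dP0A11 : Disjoint P0X A11 := C0.dXa.mono_right hA11
  have dP0A12 : Disjoint P0X A12 := C0.dXa.mono_right hA12
  have dP0Q2 : Disjoint P0X Q2X := C0.dXb.mono_right hQ2X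
  have dP0A21 : Disjoint P0X A21 := C0.dXb.mono_right hA21
  have dP0A22 : Disjoint P0X A22 := C0.dXb.mono_right hA22
  have dQ1Q2 : Disjoint Q1X Q2X := C0.dXc.mono hQ1X hQ2X
  have dQ1A21 : Disjoint Q1X A21 := C0.dXc.mono hQ1X hA21
  have dQ1A22 : Disjoint Q1X A22 := C0.dXc.mono hQ1X hA22
  have dA11Q2 : Disjoint A11 Q2X := C0.dXc.mono hA11 hQ2X
  have dA12Q2 : Disjoint A12 Q2X := C0.dXc.mono hA12 hQ2X
  have dA11A21 : Disjoint A11 A21 := C0.dXc.mono hA11 hA21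
  have dA11A22 : Disjoint A11 A22 := C0.dXc.mono hA11 hA22
  have dA12A21 : Disjoint A12 A21 := C0.dXc.mono hA12 hA21
  have dA12A22 : Disjoint A12 A22 := C0.dXc.mono hA12 hA22
  -- basic Y-side cell disjointness
  have dP0Q1Y : Disjoint P0Y Q1Y := C0.dYa.mono_right hQ1Y
  have dP0B11 : Disjoint P0Y B11 := C0.dYa.mono_right hB11
  have dP0B12 : Disjoint P0Y B12 := C0.dYa.mono_right hB12
  have dP0Q2Y : Disjoint P0Y Q2Y := C0.dYb.mono_right hQ2Y
  have dP0B21 : Disjoint P0Y B21 := C0.dYb.mono_right hB21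
  have dP0B22 : Disjoint P0Y B22 := C0.dYb.mono_right hB22
  have dQ1Q2Y : Disjoint Q1Y Q2Y := C0.dYc.mono hQ1Y hQ2Y
  have dQ1B21 : Disjoint Q1Y B21 := C0.dYc.mono hQ1Y hB21
  have dQ1B22 : Disjoint Q1Y B22 := C0.dYc.mono hQ1Y hB22
  have dB11Q2 : Disjoint B11 Q2Y := C0.dYc.mono hB11 hQ2Y
  have dB12Q2 : Disjoint B12 Q2Y := C0.dYc.mono hB12 hQ2Y
  have dB11B21 : Disjoint B11 B21 := C0.dYc.mono hB11 hB21
  have dB11B22 : Disjoint B11 B22 := C0.dYc.mono hB11 hB22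
  have dB12B21 : Disjoint B12 B21 := C0.dYc.mono hB12 hB21
  have dB12B22 : Disjoint B12 B22 := C0.dYc.mono hB12 hB22
  -- helper for disjointness of X∪Y-bounded sets
  have DD : ∀ {u1 w1 u2 w2 : Finset V}, u1 ⊆ X → w1 ⊆ Y → u2 ⊆ X → w2 ⊆ Y →
      Disjoint u1 u2 → Disjoint w1 w2 → Disjoint (u1 ∪ w1) (u2 ∪ w2) := by
    intro u1 w1 u2 w2 h1 h2 h3 h4 h5 h6
    exact Stmt16.disjU h5 (sd h1 h4) (sd h3 h2).symm h6
  -- subset-to-side facts for cells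
  have xQ1 : Q1X ⊆ X := hQ1X.trans hA1X
  have xQ2 : Q2X ⊆ X := hQ2X.trans hA2X
  have xA11 : A11 ⊆ X := hA11.trans hA1X
  have xA12 : A12 ⊆ X := hA12.trans hA1X
  have xA21 : A21 ⊆ X := hA21.trans hA2X
  have xA22 : A22 ⊆ X := hA22.trans hA2X
  have yQ1 : Q1Y ⊆ Y := hQ1Y.trans hB1Y
  have yQ2 : Q2Y ⊆ Y := hQ2Y.trans hB2Y
  have yB11 : B11 ⊆ Y := hB11.trans hB1Y
  have yB12 : B12 ⊆ Y := hB12.trans hB1Y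
  have yB21 : B21 ⊆ Y := hB21.trans hB2Y
  have yB22 : B22 ⊆ Y := hB22.trans hB2Y
  have yW7 : B11 ∪ B12 ∪ B21 ∪ B22 ⊆ Y :=
    Finset.union_subset (Finset.union_subset (Finset.union_subset yB11 yB12) yB21) yB22
  -- the 28 pairwise disjointness facts
  have d01 : Disjoint F0 F1 := DD hP0XX hP0YY xQ1 yQ1 dP0Q1 dP0Q1Y
  have d02 : Disjoint F0 F2 := DD hP0XX hP0YY xQ2 yQ2 dP0Q2 dP0Q2Y
  have d03 : Disjoint F0 S11 := (DD hP0XX hP0YY xA11 yB11 dP0A11 dP0B11).mono_right hS11b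
  have d04 : Disjoint F0 S12 := (DD hP0XX hP0YY xA12 yB12 dP0A12 dP0B12).mono_right hS12b
  have d05 : Disjoint F0 S21 := (DD hP0XX hP0YY xA21 yB21 dP0A21 dP0B21).mono_right hS21b
  have d06 : Disjoint F0 S22 := (DD hP0XX hP0YY xA22 yB22 dP0A22 dP0B22).mono_right hS22b
  have d07 : Disjoint F0 F7 := by
    refine (DD hP0XX hP0YY (Finset.empty_subset X) yW7 (by simp) ?_).mono_right ?_
    · simp only [Finset.disjoint_union_right]
      exact ⟨⟨⟨dP0B11, dP0B12⟩, dP0B21⟩, dP0B22⟩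
    · exact hF7b.trans subset_union_right
  have d12 : Disjoint F1 F2 := DD xQ1 yQ1 xQ2 yQ2 dQ1Q2 dQ1Q2Y
  have d13 : Disjoint F1 S11 := (DD xQ1 yQ1 xA11 yB11 C1.dXa C1.dYa).mono_right hS11b
  have d14 : Disjoint F1 S12 := (DD xQ1 yQ1 xA12 yB12 C1.dXb C1.dYb).mono_right hS12b
  have d15 : Disjoint F1 S21 := (DD xQ1 yQ1 xA21 yB21 dQ1A21 dQ1B21).mono_right hS21b
  have d16 : Disjoint F1 S22 := (DD xQ1 yQ1 xA22 yB22 dQ1A22 dQ1B22).mono_right hS22b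
  have d17 : Disjoint F1 F7 := by
    refine (DD xQ1 yQ1 (Finset.empty_subset X) yW7 (by simp) ?_).mono_right ?_
    · simp only [Finset.disjoint_union_right]
      exact ⟨⟨⟨C1.dYa, C1.dYb⟩, dQ1B21⟩, dQ1B22⟩
    · exact hF7b.trans subset_union_right
  have d23 : Disjoint F2 S11 := (DD xQ2 yQ2 xA11 yB11 dA11Q2.symm dB11Q2.symm).mono_right hS11b
  have d24 : Disjoint F2 S12 := (DD xQ2 yQ2 xA12 yB12 dA12Q2.symm dB12Q2.symm).mono_right hS12b
  have d25 : Disjoint F2 S21 := (DD xQ2 yQ2 xA21 yB21 C2.dXa C2.dYa).mono_right hS21b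
  have d26 : Disjoint F2 S22 := (DD xQ2 yQ2 xA22 yB22 C2.dXb C2.dYb).mono_right hS22b
  have d27 : Disjoint F2 F7 := by
    refine (DD xQ2 yQ2 (Finset.empty_subset X) yW7 (by simp) ?_).mono_right ?_
    · simp only [Finset.disjoint_union_right]
      exact ⟨⟨⟨dB11Q2.symm, dB12Q2.symm⟩, C2.dYa⟩, C2.dYb⟩
    · exact hF7b.trans subset_union_right
  have d34 : Disjoint S11 S12 :=
    ((DD xA11 yB11 xA12 yB12 C1.dXc C1.dYc).mono hS11b hS12b)
  have d35 : Disjoint S11 S21 :=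
    ((DD xA11 yB11 xA21 yB21 dA11A21 dB11B21).mono hS11b hS21b)
  have d36 : Disjoint S11 S22 :=
    ((DD xA11 yB11 xA22 yB22 dA11A22 dB11B22).mono hS11b hS22b)
  have d45 : Disjoint S12 S21 :=
    ((DD xA12 yB12 xA21 yB21 dA12A21 dB12B21).mono hS12b hS21b)
  have d46 : Disjoint S12 S22 :=
    ((DD xA12 yB12 xA22 yB22 dA12A22 dB12B22).mono hS12b hS22b)
  have d56 : Disjoint S21 S22 :=
    ((DD xA21 yB21 xA22 yB22 C2.dXc C2.dYc).mono hS21b hS22b)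
  have DUB : ∀ {A' B' B'' L' S' : Finset V}, S' ⊆ A' ∪ B' → A' ⊆ X → B'' ⊆ Y →
      Disjoint B' B'' → L' ⊆ B'' → Disjoint S' L' := by
    intro A' B' B'' L' S' hS hA hB'' hd hL
    refine Disjoint.mono hS hL ?_
    rw [Finset.disjoint_union_left]
    exact ⟨sd hA hB'', hd⟩
  have d37 : Disjoint S11 F7 := by
    simp only [hF7, Finset.disjoint_union_right]
    exact ⟨⟨⟨hd11, DUB hS11b xA11 yB12 C1.dYc hL12⟩,
      DUB hS11b xA11 yB21 dB11B21 hL21⟩, DUB hS11b xA11 yB22 dB11B22 hL22⟩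
  have d47 : Disjoint S12 F7 := by
    simp only [hF7, Finset.disjoint_union_right]
    exact ⟨⟨⟨DUB hS12b xA12 yB11 C1.dYc.symm hL11, hd12⟩,
      DUB hS12b xA12 yB21 dB12B21 hL21⟩, DUB hS12b xA12 yB22 dB12B22 hL22⟩
  have d57 : Disjoint S21 F7 := by
    simp only [hF7, Finset.disjoint_union_right]
    exact ⟨⟨⟨DUB hS21b xA21 yB11 dB11B21.symm hL11,
      DUB hS21b xA21 yB12 dB12B21.symm hL12⟩, hd21⟩, DUB hS21b xA21 yB22 C2.dYc hL22⟩
  have d67 : Disjoint S22 F7 := by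
    simp only [hF7, Finset.disjoint_union_right]
    exact ⟨⟨⟨DUB hS22b xA22 yB11 dB11B22.symm hL11,
      DUB hS22b xA22 yB12 dB12B22.symm hL12⟩, DUB hS22b xA22 yB21 C2.dYc.symm hL21⟩, hd22⟩
  -- cardinalities
  obtain ⟨cX0, cY0⟩ := Stmt16.conf_cardX C0
  obtain ⟨cX1, cY1⟩ := Stmt16.conf_cardX C1
  obtain ⟨cX2, cY2⟩ := Stmt16.conf_cardX C2
  have bal0 := C0.bal
  have bal1 := C1.bal
  have bal2 := C2.bal
  have dL1 : Disjoint L11 L12 := C1.dYc.mono hL11 hL12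
  have dL2 : Disjoint (L11 ∪ L12) L21 := by
    simp only [Finset.disjoint_union_left]
    exact ⟨dB11B21.mono hL11 hL21, dB12B21.mono hL12 hL21⟩
  have dL3 : Disjoint (L11 ∪ L12 ∪ L21) L22 := by
    simp only [Finset.disjoint_union_left]
    exact ⟨⟨dB11B22.mono hL11 hL22, dB12B22.mono hL12 hL22⟩, C2.dYc.mono hL21 hL22⟩
  have hF7card : F7.card = t := by
    rw [hF7, card_union_of_disjoint dL3, card_union_of_disjoint dL2,
      card_union_of_disjoint dL1]
    omega
  -- the union is everything
  have hUuniv : F0 ∪ F1 ∪ F2 ∪ S11 ∪ S12 ∪ S21 ∪ S22 ∪ F7 = (Finset.univ : Finset V) := by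
    apply Finset.eq_univ_of_forall
    intro z
    have hz : z ∈ X ∪ Y := by
      rcases z with a | b
      · exact mem_union_left _ ((hXmem _).mpr ⟨a, rfl⟩)
      · exact mem_union_right _ ((hYmem _).mpr ⟨b, rfl⟩)
    have hin : ∀ {s : Finset V},
        s = P0X ∨ s = P0Y ∨ s = Q1X ∨ s = Q1Y ∨ s = Q2X ∨ s = Q2Y ∨
        s = S11 ∨ s = S12 ∨ s = S21 ∨ s = S22 ∨ s = L11 ∨ s = L12 ∨ s = L21 ∨ s = L22 →
        s ⊆ F0 ∪ F1 ∪ F2 ∪ S11 ∪ S12 ∪ S21 ∪ S22 ∪ F7 := by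
      intro s hs
      rcases hs with rfl|rfl|rfl|rfl|rfl|rfl|rfl|rfl|rfl|rfl|rfl|rfl|rfl|rfl <;>
        · intro w hw
          simp only [Finset.mem_union, hF0, hF1, hF2, hF7]
          tauto
    rcases mem_union.mp hz with hz | hz
    · rw [← C0.uX] at hz
      rcases mem_union.mp hz with hz | hz
      · rcases mem_union.mp hz with hz | hz
        · exact hin (by tauto) hz
        · rw [← C1.uX] at hz
          rcases mem_union.mp hz with hz | hz
          · rcases mem_union.mp hz with hz | hz
            · exact hin (by tauto) hz
            · exact hin (by tauto) (hAS11 hz)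
          · exact hin (by tauto) (hAS12 hz)
      · rw [← C2.uX] at hz
        rcases mem_union.mp hz with hz | hz
        · rcases mem_union.mp hz with hz | hz
          · exact hin (by tauto) hz
          · exact hin (by tauto) (hAS21 hz)
        · exact hin (by tauto) (hAS22 hz)
    · rw [← C0.uY] at hz
      rcases mem_union.mp hz with hz | hz
      · rcases mem_union.mp hz with hz | hz
        · exact hin (by tauto) hz
        · rw [← C1.uY] at hz
          rcases mem_union.mp hz with hz | hz
          · rcases mem_union.mp hz with hz | hz
            · exact hin (by tauto) hz
            · have h2 : z ∈ S11 ∪ L11 := by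
                rw [hu11]; exact mem_union_right _ hz
              rcases mem_union.mp h2 with h | h
              · exact hin (by tauto) h
              · exact hin (by tauto) h
          · have h2 : z ∈ S12 ∪ L12 := by
              rw [hu12]; exact mem_union_right _ hz
            rcases mem_union.mp h2 with h | h
            · exact hin (by tauto) h
            · exact hin (by tauto) h
      · rw [← C2.uY] at hz
        rcases mem_union.mp hz with hz | hz
        · rcases mem_union.mp hz with hz | hz
          · exact hin (by tauto) hz
          · have h2 : z ∈ S21 ∪ L21 := by
              rw [hu21]; exact mem_union_right _ hz
            rcases mem_union.mp h2 with h | h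
            · exact hin (by tauto) h
            · exact hin (by tauto) h
        · have h2 : z ∈ S22 ∪ L22 := by
            rw [hu22]; exact mem_union_right _ hz
          rcases mem_union.mp h2 with h | h
          · exact hin (by tauto) h
          · exact hin (by tauto) h
  -- final assembly
  refine ⟨![(↑F0 : Set V), ↑F1, ↑F2, ↑S11, ↑S12, ↑S21, ↑S22, ↑F7],
    ?_, ?_, ?_, ?_, ?_, ?_, ?_, ?_, ?_, ?_⟩
  · show IsPathSet (bipColour c 0) ↑F0
    rw [hF0]; exact Stmt16.conf_pathset C0
  · show IsPathSet (bipColour c 1) ↑F1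
    rw [hF1]; exact Stmt16.conf_pathset C1
  · show IsPathSet (bipColour c 1) ↑F2
    rw [hF2]; exact Stmt16.conf_pathset C2
  · show IsPathSet (bipColour c 2) ↑S11
    exact Stmt16.finpathset_isPathSet hp11
  · show IsPathSet (bipColour c 2) ↑S12
    exact Stmt16.finpathset_isPathSet hp12
  · show IsPathSet (bipColour c 2) ↑S21
    exact Stmt16.finpathset_isPathSet hp21
  · show IsPathSet (bipColour c 2) ↑S22
    exact Stmt16.finpathset_isPathSet hp22
  · show (↑F7 : Set V).ncard = t
    rw [Set.ncard_coe_finset]; exact hF7card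
  · have key : ∀ (s u : Finset V), Disjoint s u → Disjoint (↑s : Set V) ↑u :=
      fun s u h => Finset.disjoint_coe.mpr h
    exact Stmt16.eight_disjoint (key _ _ d01) (key _ _ d02) (key _ _ d03) (key _ _ d04)
      (key _ _ d05) (key _ _ d06) (key _ _ d07) (key _ _ d12) (key _ _ d13) (key _ _ d14)
      (key _ _ d15) (key _ _ d16) (key _ _ d17) (key _ _ d23) (key _ _ d24) (key _ _ d25)
      (key _ _ d26) (key _ _ d27) (key _ _ d34) (key _ _ d35) (key _ _ d36) (key _ _ d37)
      (key _ _ d45) (key _ _ d46) (key _ _ d47) (key _ _ d56) (key _ _ d57) (key _ _ d67)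
  · exact Stmt16.eight_union hUuniv

/-- For every `t ≥ 0` and every `3`-edge-colouring (`0` = red, `1` = blue,
`2` = green) of `K_{n,n+t}`, the vertex set can be partitioned into the vertex sets of
one red path, two blue paths, four green paths, and a set of `t` single vertices. -/
theorem statement16 {n t : ℕ} (c : Fin n → Fin (n + t) → Fin 3) :
    ∃ P : Fin 8 → Set (Fin n ⊕ Fin (n + t)),
      IsPathSet (bipColour c 0) (P 0) ∧
      IsPathSet (bipColour c 1) (P 1) ∧
      IsPathSet (bipColour c 1) (P 2) ∧
      IsPathSet (bipColour c 2) (P 3) ∧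
      IsPathSet (bipColour c 2) (P 4) ∧
      IsPathSet (bipColour c 2) (P 5) ∧
      IsPathSet (bipColour c 2) (P 6) ∧
      (P 7).ncard = t ∧
      (∀ i j, i ≠ j → Disjoint (P i) (P j)) ∧
      (⋃ i, P i) = Set.univ := by
  exact statement16' c
end

section
/- Suppose the edges of the complete bipartite graph K_{n,n} are coloured with two colours (red and blue) in such a way that the red colour class (the graph on V(K_{n,n}) consisting of the red edges) is a vertex-disjoint union of stars. Then the vertex set of K_{n,n} can be covered by three pairwise vertex-disjoint blue paths. -/
/-- A graph is a star: a tree with at most one vertex of degree greater than one. -/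
def IsStar {V : Type*} (G : SimpleGraph V) : Prop :=
  G.IsTree ∧ {v : V | 1 < {u : V | G.Adj v u}.ncard}.Subsingleton

open Finset

namespace SimpleGraph

variable {V : Type*} (G : SimpleGraph V)

structure IsPathCover (s : Set V) (P : List (List V)) : Prop where
  isChain : ∀ p ∈ P, p.IsChain G.Adj
  nodup : P.flatten.Nodup
  mem_flatten : ∀ x, x ∈ P.flatten ↔ x ∈ s

variable {G}

theorem isPathSet_of_isChain {p : List V} (hp : p.IsChain G.Adj) (hnd : p.Nodup) :
    IsPathSet G {x | x ∈ p} := by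
  rcases eq_or_ne p [] with rfl | hne
  · exact Or.inl (by simp)
  · exact Or.inr ⟨_, _, Walk.ofSupport p hne hp, by simpa [Walk.isPath_def] using hnd, by simp⟩

namespace IsPathCover

theorem perm {s : Set V} {P Q : List (List V)} (hP : G.IsPathCover s P) (hPQ : P.Perm Q) :
    G.IsPathCover s Q where
  isChain p hp := hP.isChain p (hPQ.mem_iff.2 hp)
  nodup := hPQ.flatten.nodup_iff.1 hP.nodup
  mem_flatten x := hPQ.flatten.mem_iff.symm.trans (hP.mem_flatten x)

theorem cons_cons {s : Set V} {p : List V} {Q : List (List V)} (hP : G.IsPathCover s (p :: Q))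
    {x y : V} (hxy : G.Adj x y) (hx : x ∉ s) (hy : y ∉ s) (hyp : ∀ z ∈ p.head?, G.Adj y z) :
    G.IsPathCover (insert x (insert y s)) ((x :: y :: p) :: Q) := by
  have hflat : ((x :: y :: p) :: Q).flatten = x :: y :: (p :: Q).flatten := rfl
  refine ⟨?_, ?_, fun z => ?_⟩
  · simp only [List.mem_cons]
    rintro q (rfl | hq)
    · exact List.isChain_cons.2 ⟨by simpa using hxy,
        List.isChain_cons.2 ⟨hyp, hP.isChain p List.mem_cons_self⟩⟩
    · exact hP.isChain q (List.mem_cons_of_mem p hq)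
  · rw [hflat, List.nodup_cons, List.nodup_cons, List.mem_cons, hP.mem_flatten, hP.mem_flatten]
    simp only [not_or]
    exact ⟨⟨hxy.ne, hx⟩, hy, hP.nodup⟩
  · rw [hflat, List.mem_cons, List.mem_cons, hP.mem_flatten]
    rfl

theorem isPathSet {s : Set V} {P : List (List V)} (hP : G.IsPathCover s P) {p : List V}
    (hp : p ∈ P) : IsPathSet G {x | x ∈ p} :=
  isPathSet_of_isChain (hP.isChain p hp) (List.nodup_flatten.1 hP.nodup |>.1 p hp)

end IsPathCover

end SimpleGraph

theorem List.length_le_card_of_forall_head_mem {V : Type*} [DecidableEq V]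
    {P : List (List V)} (hP : P.flatten.Nodup) {X : Finset V}
    (hX : ∀ p ∈ P, ∃ z ∈ p.head?, z ∈ X) : P.length ≤ #X := by
  induction P generalizing X with
  | nil => simp
  | cons p Q ih =>
    obtain ⟨z, hzp, hzX⟩ := hX p List.mem_cons_self
    rw [List.flatten_cons, List.nodup_append] at hP
    have hz : z ∈ p := List.mem_of_mem_head? hzp
    have hQ : Q.length ≤ #(X.erase z) := ih hP.2.1 fun q hq => by
      obtain ⟨w, hwq, hwX⟩ := hX q (List.mem_cons_of_mem p hq)
      have hw : w ∈ Q.flatten := List.mem_flatten.2 ⟨q, hq, List.mem_of_mem_head? hwq⟩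
      exact ⟨w, hwq, Finset.mem_erase.2 ⟨(hP.2.2 z hz w hw).symm, hwX⟩⟩
    rw [Finset.card_erase_of_mem hzX] at hQ
    have := Finset.card_pos.2 ⟨z, hzX⟩
    simp only [List.length_cons]
    omega

section StarForest

variable {α β : Type*} {r : α → β → Prop}

-- For a bipartite graph, every edge having an endpoint of degree one is the same as every
-- component being a star.
def IsStarForest (r : α → β → Prop) : Prop :=
  ∀ a b, r a b → (∀ b', r a b' → b' = b) ∨ (∀ a', r a' b → a' = a)

theorem IsStarForest.swap (hr : IsStarForest r) : IsStarForest (fun b a => r a b) :=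
  fun b a hab => (hr a b hab).symm

variable [DecidableRel r]

theorem IsStarForest.exists_card_filter_le_one (hr : IsStarForest r) {S : Finset α}
    {T : Finset β} (hS : S.Nonempty) (hST : #T ≤ #S) : ∃ a ∈ S, #{b ∈ T | r a b} ≤ 1 := by
  by_contra! h
  have hleaf : ∀ a ∈ S, ∀ b, r a b → ∀ a', r a' b → a' = a := fun a ha b hab =>
    (hr a b hab).resolve_left fun hb => by
      obtain ⟨b₁, hb₁, b₂, hb₂, hne⟩ := one_lt_card.1 (h a ha)
      exact hne ((hb b₁ (mem_filter.1 hb₁).2).trans (hb b₂ (mem_filter.1 hb₂).2).symm)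
  have hdisj : (S : Set α).PairwiseDisjoint fun a => {b ∈ T | r a b} := fun a ha a' _ hne =>
    disjoint_left.2 fun b hb hb' =>
      hne (hleaf a ha b (mem_filter.1 hb).2 a' (mem_filter.1 hb').2).symm
  have hsub : S.disjiUnion (fun a => {b ∈ T | r a b}) hdisj ⊆ T := fun b hb => by
    obtain ⟨a, -, hb⟩ := mem_disjiUnion.1 hb
    exact (mem_filter.1 hb).1
  have hcount := calc
    #S • 2 ≤ ∑ a ∈ S, #{b ∈ T | r a b} := card_nsmul_le_sum _ _ _ fun a ha => h a ha
    _ = #(S.disjiUnion _ hdisj) := (card_disjiUnion _ _ _).symm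
    _ ≤ #T := card_le_card hsub
  rw [smul_eq_mul] at hcount
  have := hS.card_pos
  omega

variable [DecidableEq α] [DecidableEq β]

theorem IsStarForest.exists_leaf_pair_or_singletons (hr : IsStarForest r) {S : Finset α}
    {T : Finset β} (hS : S.Nonempty) (hST : #S = #T) :
    (∃ u ∈ S, ∃ v ∈ T, #{b ∈ T | r u b} ≤ 1 ∧ #{a ∈ S | r a v} ≤ 1 ∧ ¬ r u v) ∨
      ∃ u v, S = {u} ∧ T = {v} := by
  obtain ⟨u, hu, hu1⟩ := hr.exists_card_filter_le_one hS hST.ge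
  obtain ⟨v, hv, hv1⟩ :=
    hr.swap.exists_card_filter_le_one (card_pos.1 (hST ▸ hS.card_pos)) hST.le
  by_cases huv : r u v
  swap
  · exact Or.inl ⟨u, hu, v, hv, hu1, hv1, huv⟩
  -- Now `u` is the only red neighbour of `v`, so a leaf of the graph without `u` and `v` is a
  -- leaf of the whole graph and is not red-adjacent to `v`.
  have hv_only : ∀ a ∈ S, r a v → a = u := fun a ha hav =>
    card_le_one.1 hv1 a (mem_filter.2 ⟨ha, hav⟩) u (mem_filter.2 ⟨hu, huv⟩)
  rcases (S.erase u).eq_empty_or_nonempty with hSu | hSu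
  · have hSu : S = {u} := ((erase_eq_empty_iff S u).1 hSu).resolve_left hS.ne_empty
    have hT1 : #T ≤ 1 := by rw [← hST, hSu, card_singleton]
    exact Or.inr ⟨u, v, hSu,
      eq_singleton_iff_unique_mem.2 ⟨hv, fun b hb => card_le_one.1 hT1 b hb v hv⟩⟩
  · obtain ⟨u', hu', hu'1⟩ := hr.exists_card_filter_le_one hSu
      (by rw [card_erase_of_mem hu, card_erase_of_mem hv, hST])
    have hu'v : ¬ r u' v := fun h => ne_of_mem_erase hu' (hv_only u' (mem_of_mem_erase hu') h)
    refine Or.inl ⟨u', mem_of_mem_erase hu', v, hv, ?_, hv1, hu'v⟩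
    rwa [← erase_eq_of_notMem (a := v) (s := {b ∈ T | r u' b}) (by simp [hu'v]),
      ← filter_erase]

variable (G : SimpleGraph (α ⊕ β)) (hG : ∀ a b, ¬ r a b → G.Adj (.inl a) (.inr b))
include hG

theorem exists_pathCover_insert_pair {S : Finset α} {T : Finset β} {u : α} {v : β} (hu : u ∈ S)
    (hv : v ∈ T) (hu1 : #{b ∈ T | r u b} ≤ 1) (hv1 : #{a ∈ S | r a v} ≤ 1) (huv : ¬ r u v)
    {P : List (List (α ⊕ β))} (hP3 : P.length = 3)
    (hP : G.IsPathCover ↑((S.erase u).disjSum (T.erase v)) P) :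
    ∃ P' : List (List (α ⊕ β)), P'.length = 3 ∧ G.IsPathCover ↑(S.disjSum T) P' := by
  obtain ⟨p, hp, hpX⟩ : ∃ p ∈ P, ∀ z ∈ p.head?, z ∉ {a ∈ S | r a v}.disjSum {b ∈ T | r u b} := by
    by_contra! h
    have := List.length_le_card_of_forall_head_mem hP.nodup h
    rw [card_disjSum] at this
    omega
  obtain ⟨P₁, P₂, rfl⟩ := List.append_of_mem hp
  have hcover := hP.perm List.perm_middle
  have hlen : ∀ q, (q :: (P₁ ++ P₂)).length = 3 := by simp at hP3 ⊢; omega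
  have hhead : ∀ z ∈ p.head?, z ∈ (S.erase u).disjSum (T.erase v) := fun z hz =>
    (hP.mem_flatten z).1 (List.mem_flatten.2 ⟨p, hp, List.mem_of_mem_head? hz⟩)
  have hS : (↑(S.disjSum T) : Set (α ⊕ β)) =
      insert (.inl u) (insert (.inr v) ↑((S.erase u).disjSum (T.erase v))) := by
    ext (a | b)
    · by_cases a = u <;> simp_all
    · by_cases b = v <;> simp_all
  have hu' : Sum.inl u ∉ (↑((S.erase u).disjSum (T.erase v)) : Set (α ⊕ β)) := by simp
  have hv' : Sum.inr v ∉ (↑((S.erase u).disjSum (T.erase v)) : Set (α ⊕ β)) := by simp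
  rcases hh : p.head? with _ | (a | b)
  · exact ⟨_, hlen _, hS ▸ hcover.cons_cons (hG u v huv) hu' hv' (by simp [hh])⟩
  · have ha : a ∈ S := mem_of_mem_erase (by simpa using hhead _ hh)
    have hav : ¬ r a v := fun h => hpX _ hh (by simp [ha, h])
    refine ⟨_, hlen _, hS ▸ hcover.cons_cons (hG u v huv) hu' hv' ?_⟩
    simpa [hh] using (hG a v hav).symm
  · have hb : b ∈ T := mem_of_mem_erase (by simpa using hhead _ hh)
    have hub : ¬ r u b := fun h => hpX _ hh (by simp [hb, h])
    refine ⟨_, hlen _, hS ▸ Set.insert_comm _ _ _ ▸ hcover.cons_cons (hG u v huv).symm hv' hu' ?_⟩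
    simpa [hh] using hG u b hub

theorem IsStarForest.exists_pathCover (hr : IsStarForest r) {S : Finset α} {T : Finset β}
    (hST : #S = #T) :
    ∃ P : List (List (α ⊕ β)), P.length = 3 ∧ G.IsPathCover ↑(S.disjSum T) P := by
  induction hn : #S generalizing S T with
  | zero =>
    obtain rfl : S = ∅ := card_eq_zero.1 hn
    obtain rfl : T = ∅ := card_eq_zero.1 (hST ▸ hn)
    exact ⟨[[], [], []], rfl, by simp, by simp, by simp⟩
  | succ n ih =>
    rcases hr.exists_leaf_pair_or_singletons (card_pos.1 (by omega)) hST with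
      ⟨u, hu, v, hv, hu1, hv1, huv⟩ | ⟨u, v, rfl, rfl⟩
    · obtain ⟨P, hP3, hP⟩ := ih (S := S.erase u) (T := T.erase v)
        (by rw [card_erase_of_mem hu, card_erase_of_mem hv, hST])
        (by rw [card_erase_of_mem hu, hn, Nat.add_sub_cancel])
      exact exists_pathCover_insert_pair G hG hu hv hu1 hv1 huv hP3 hP
    · exact ⟨[[.inl u], [.inr v], []], rfl, by simp, by simp, by simp⟩

end StarForest

theorem SimpleGraph.one_lt_ncard_adj_induce_supp {V : Type*} [Finite V] {G : SimpleGraph V}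
    {C : G.ConnectedComponent} {z x y : V} (hz : z ∈ C.supp) (hx : G.Adj z x) (hy : G.Adj z y)
    (hxy : x ≠ y) : 1 < {w : C.supp | (G.induce C.supp).Adj ⟨z, hz⟩ w}.ncard := by
  have hmem : ∀ {w}, G.Adj z w → w ∈ C.supp := fun h =>
    (C.mem_supp_iff _).2 ((ConnectedComponent.connectedComponentMk_eq_of_adj h).symm.trans
      ((C.mem_supp_iff z).1 hz))
  rw [Set.one_lt_ncard_iff (Set.toFinite _)]
  exact ⟨⟨x, hmem hx⟩, ⟨y, hmem hy⟩, hx, hy, by simpa using hxy⟩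

theorem SimpleGraph.adj_unique_or_adj_unique_of_isStar {V : Type*} [Finite V]
    {G : SimpleGraph V} (hG : ∀ C : G.ConnectedComponent, IsStar (G.induce C.supp)) {z z' : V}
    (hzz' : G.Adj z z') : (∀ x, G.Adj z x → x = z') ∨ (∀ x, G.Adj z' x → x = z) := by
  by_contra! h
  obtain ⟨⟨x, hzx, hxz'⟩, ⟨y, hz'y, hyz⟩⟩ := h
  set C := G.connectedComponentMk z
  have hz : z ∈ C.supp := (C.mem_supp_iff z).2 rfl
  have hz' : z' ∈ C.supp :=
    (C.mem_supp_iff z').2 (ConnectedComponent.connectedComponentMk_eq_of_adj hzz').symm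
  exact G.ne_of_adj hzz' (congrArg Subtype.val ((hG C).2
    (one_lt_ncard_adj_induce_supp hz hzx hzz' hxz')
    (one_lt_ncard_adj_induce_supp hz' hz'y hzz'.symm hyz)))

theorem isStarForest_bipColour {α β : Type*} [Finite α] [Finite β] {k : ℕ} (c : α → β → Fin k)
    (i : Fin k)
    (h : ∀ C : (bipColour c i).ConnectedComponent, IsStar ((bipColour c i).induce C.supp)) :
    IsStarForest (fun a b => c a b = i) := fun a b hab =>
  (SimpleGraph.adj_unique_or_adj_unique_of_isStar h
    (show (bipColour c i).Adj (.inl a) (.inr b) from hab)).imp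
    (fun h b' hb' => Sum.inr_injective (h (.inr b') hb'))
    (fun h a' ha' => Sum.inl_injective (h (.inl a') ha'))

/-- Suppose `K_{n,n}` is `2`-edge-coloured (`0` = red, `1` = blue) so that the red
colour class is a vertex-disjoint union of stars (every connected component of the
red graph is a star). Then the vertex set of `K_{n,n}` can be covered by three pairwise
vertex-disjoint blue paths. -/
theorem statement17 {n : ℕ} (c : Fin n → Fin n → Fin 2)
    (hstar : ∀ comp : (bipColour c 0).ConnectedComponent,
      IsStar ((bipColour c 0).induce comp.supp)) :
    ∃ P₁ P₂ P₃ : Set (Fin n ⊕ Fin n),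
      IsPathSet (bipColour c 1) P₁ ∧
      IsPathSet (bipColour c 1) P₂ ∧
      IsPathSet (bipColour c 1) P₃ ∧
      Disjoint P₁ P₂ ∧ Disjoint P₁ P₃ ∧ Disjoint P₂ P₃ ∧
      P₁ ∪ P₂ ∪ P₃ = Set.univ := by
  obtain ⟨P, hP3, hP⟩ := (isStarForest_bipColour c 0 hstar).exists_pathCover (bipColour c 1)
    (fun a b h => Fin.eq_one_of_ne_zero _ h) (S := .univ) (T := .univ) rfl
  obtain ⟨p₁, p₂, p₃, rfl⟩ := List.length_eq_three.1 hP3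
  obtain ⟨⟨d₁₂, d₁₃⟩, d₂₃⟩ : _ ∧ _ := by simpa using (List.nodup_flatten.1 hP.nodup).2
  refine ⟨{x | x ∈ p₁}, {x | x ∈ p₂}, {x | x ∈ p₃}, hP.isPathSet (by simp),
    hP.isPathSet (by simp), hP.isPathSet (by simp), Set.disjoint_left.2 fun x h₁ h₂ => d₁₂ h₁ h₂,
    Set.disjoint_left.2 fun x h₁ h₃ => d₁₃ h₁ h₃, Set.disjoint_left.2 fun x h₂ h₃ => d₂₃ h₂ h₃, ?_⟩
  ext x
  simpa [or_assoc] using hP.mem_flatten x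
end
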